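/- arXiv:2507.23680 — 7 statements merged into one kernel-verified Lean document; each statement's English description precedes it below -/
import Mathlib

section
/- Fix parameters α, β, β̃, K, K̃, L > 0 and μ ∈ [0,1), and an even kernel Γ ∈ L¹(ℝ) with Γ ≥ 0 almost everywhere. Let T > 0 and let (A,ρ) be a classical solution of the cross-diffusion system on [0,T) with A ≥ 0 and ρ ≥ 0 on [0,T)×ℝ, and suppose sup_{x∈ℝ} ρ(0,x) ≤ β/(α(1−μ)). Then ρ(t,x) ≤ β/(α(1−μ)) for all (t,x) ∈ [0,T) × ℝ. -/
open MeasureTheory Set Function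

/-- Partial derivative in the first (time) variable. -/
noncomputable def pd_t (f : ℝ → ℝ → ℝ) (t x : ℝ) : ℝ := deriv (fun s => f s x) t

/-- Partial derivative in the second (space) variable. -/
noncomputable def pd_x (f : ℝ → ℝ → ℝ) (t x : ℝ) : ℝ := deriv (fun y => f t y) x

/-- The nonlocal average ⟨ρ⟩(t,x) = ∫ Γ(x-y) ρ(t,y) dy. -/
noncomputable def convAvg (Γ : ℝ → ℝ) (ρ : ℝ → ℝ → ℝ) (t x : ℝ) : ℝ :=
  ∫ y : ℝ, Γ (x - y) * ρ t y

/-- A classical solution of the cross-diffusion system on the time set `J`: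
jointly continuous, `2L`-periodic in space, with continuous partial derivatives
`∂ₜA, ∂ₓA, ∂ₓ²A, ∂ₜρ, ∂ₓρ, ∂ₓ²ρ`, satisfying the two equations pointwise. -/
structure IsClassicalSolution (α β βt K Kt L μ : ℝ) (Γ : ℝ → ℝ)
    (J : Set ℝ) (A ρ : ℝ → ℝ → ℝ) : Prop where
  contA : ContinuousOn (Function.uncurry A) (J ×ˢ (univ : Set ℝ))
  contρ : ContinuousOn (Function.uncurry ρ) (J ×ˢ (univ : Set ℝ))
  boundedρ : ∀ t ∈ J, ∃ M : ℝ, ∀ x : ℝ, |ρ t x| ≤ M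
  measρ : ∀ t ∈ J, Measurable (ρ t)
  periodicA : ∀ t ∈ J, ∀ x : ℝ, A t (x + 2 * L) = A t x
  periodicρ : ∀ t ∈ J, ∀ x : ℝ, ρ t (x + 2 * L) = ρ t x
  diffA_t : ∀ t ∈ J, ∀ x : ℝ, DifferentiableAt ℝ (fun s => A s x) t
  diffρ_t : ∀ t ∈ J, ∀ x : ℝ, DifferentiableAt ℝ (fun s => ρ s x) t
  diffA_x : ∀ t ∈ J, ∀ x : ℝ, DifferentiableAt ℝ (fun y => A t y) x
  diffρ_x : ∀ t ∈ J, ∀ x : ℝ, DifferentiableAt ℝ (fun y => ρ t y) x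
  diffA_xx : ∀ t ∈ J, ∀ x : ℝ, DifferentiableAt ℝ (fun y => pd_x A t y) x
  diffρ_xx : ∀ t ∈ J, ∀ x : ℝ, DifferentiableAt ℝ (fun y => pd_x ρ t y) x
  cont_dtA : ContinuousOn (Function.uncurry (pd_t A)) (J ×ˢ (univ : Set ℝ))
  cont_dtρ : ContinuousOn (Function.uncurry (pd_t ρ)) (J ×ˢ (univ : Set ℝ))
  cont_dxA : ContinuousOn (Function.uncurry (pd_x A)) (J ×ˢ (univ : Set ℝ))
  cont_dxρ : ContinuousOn (Function.uncurry (pd_x ρ)) (J ×ˢ (univ : Set ℝ))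
  cont_dxxA : ContinuousOn (Function.uncurry (pd_x (pd_x A))) (J ×ˢ (univ : Set ℝ))
  cont_dxxρ : ContinuousOn (Function.uncurry (pd_x (pd_x ρ))) (J ×ˢ (univ : Set ℝ))
  eqA : ∀ t ∈ J, ∀ x : ℝ, pd_t A t x =
      A t x * (α * ρ t x - μ * α * (ρ t x - convAvg Γ ρ t x))
      + βt * A t x * (1 - ρ t x * A t x / Kt)
      + pd_x (fun s y => ρ s y * pd_x A s y) t x
  eqρ : ∀ t ∈ J, ∀ x : ℝ, pd_t ρ t x =
      β * ρ t x * (1 - A t x * ρ t x / K) - α * (ρ t x) ^ 2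
      + μ * α * ρ t x * (ρ t x - convAvg Γ ρ t x)
      + pd_x (fun s y => ρ s y * pd_x ρ s y) t x

/-- C⁴ spatial regularity: `∂ₓ³ρ, ∂ₓ⁴ρ` exist and are continuous, and
`∂ₜ∂ₓ²ρ` exists, is continuous, and equals `∂ₓ²∂ₜρ`. -/
structure HasC4SpatialRegularity (J : Set ℝ) (ρ : ℝ → ℝ → ℝ) : Prop where
  diff_x3 : ∀ t ∈ J, ∀ x : ℝ, DifferentiableAt ℝ (fun y => pd_x (pd_x ρ) t y) x
  diff_x4 : ∀ t ∈ J, ∀ x : ℝ, DifferentiableAt ℝ (fun y => pd_x (pd_x (pd_x ρ)) t y) x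
  cont_x3 : ContinuousOn (Function.uncurry (pd_x (pd_x (pd_x ρ)))) (J ×ˢ (univ : Set ℝ))
  cont_x4 : ContinuousOn (Function.uncurry (pd_x (pd_x (pd_x (pd_x ρ))))) (J ×ˢ (univ : Set ℝ))
  diff_t_xx : ∀ t ∈ J, ∀ x : ℝ, DifferentiableAt ℝ (fun s => pd_x (pd_x ρ) s x) t
  cont_t_xx : ContinuousOn (Function.uncurry (pd_t (pd_x (pd_x ρ)))) (J ×ˢ (univ : Set ℝ))
  commute : ∀ t ∈ J, ∀ x : ℝ, pd_t (pd_x (pd_x ρ)) t x = pd_x (pd_x (pd_t ρ)) t x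

lemma periodic_reduce {f : ℝ → ℝ} {c : ℝ} (hc : 0 < c)
    (hp : ∀ x, f (x + c) = f x) (x : ℝ) :
    ∃ y ∈ Icc 0 c, f y = f x := by
  have hper : Function.Periodic f c := hp
  refine ⟨x - ⌊x / c⌋ * c, ⟨Int.sub_floor_div_mul_nonneg x hc,
    (Int.sub_floor_div_mul_lt x hc).le⟩, hper.sub_int_mul_eq _⟩

lemma deriv_nonneg_of_past_lt {g : ℝ → ℝ} {t₀ : ℝ} (ht₀ : 0 < t₀)
    (hd : DifferentiableAt ℝ g t₀)
    (hlt : ∀ s, 0 ≤ s → s < t₀ → g s < g t₀) :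
    0 ≤ deriv g t₀ := by
  have hs : Filter.Tendsto (slope g t₀) (nhdsWithin t₀ {t₀}ᶜ) (nhds (deriv g t₀)) :=
    hasDerivAt_iff_tendsto_slope.1 hd.hasDerivAt
  have hmono : Iio t₀ ⊆ ({t₀}ᶜ : Set ℝ) := fun y hy => by
    simp only [mem_compl_iff, mem_singleton_iff]; exact ne_of_lt hy
  have hs' : Filter.Tendsto (slope g t₀) (nhdsWithin t₀ (Iio t₀)) (nhds (deriv g t₀)) :=
    hs.mono_left (nhdsWithin_mono _ hmono)
  refine ge_of_tendsto hs' ?_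
  have hmem : Ioo 0 t₀ ∈ nhdsWithin t₀ (Iio t₀) :=
    Ioo_mem_nhdsLT_of_mem ⟨ht₀, le_rfl⟩
  filter_upwards [hmem] with s hsm
  have h1 : g s - g t₀ < 0 := sub_neg.2 (hlt s hsm.1.le hsm.2)
  have h2 : s - t₀ < 0 := sub_neg.2 hsm.2
  have : 0 < (s - t₀)⁻¹ * (g s - g t₀) :=
    mul_pos_of_neg_of_neg (inv_neg''.2 h2) h1
  rw [slope_def_field, div_eq_inv_mul]
  exact this.le

lemma secondDeriv_nonpos_at_max {f : ℝ → ℝ} {x₀ : ℝ}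
    (hd : ∀ x, DifferentiableAt ℝ f x)
    (hd2 : DifferentiableAt ℝ (deriv f) x₀)
    (hmax : ∀ y, f y ≤ f x₀) :
    deriv (deriv f) x₀ ≤ 0 := by
  by_contra hcon
  push_neg at hcon
  have h1 : deriv f x₀ = 0 := by
    have : IsLocalMax f x₀ := Filter.Eventually.of_forall hmax
    exact this.deriv_eq_zero
  have hs : Filter.Tendsto (slope (deriv f) x₀) (nhdsWithin x₀ {x₀}ᶜ)
      (nhds (deriv (deriv f) x₀)) := hasDerivAt_iff_tendsto_slope.1 hd2.hasDerivAt
  have hmono : Ioi x₀ ⊆ ({x₀}ᶜ : Set ℝ) := fun y hy => by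
    simp only [mem_compl_iff, mem_singleton_iff]; exact (ne_of_gt hy)
  have hs' : Filter.Tendsto (slope (deriv f) x₀) (nhdsWithin x₀ (Ioi x₀))
      (nhds (deriv (deriv f) x₀)) := hs.mono_left (nhdsWithin_mono _ hmono)
  have hev : ∀ᶠ y in nhdsWithin x₀ (Ioi x₀), 0 < slope (deriv f) x₀ y :=
    hs'.eventually (lt_mem_nhds hcon)
  have hev2 : ∀ᶠ y in nhdsWithin x₀ (Ioi x₀), 0 < deriv f y := by
    filter_upwards [hev, self_mem_nhdsWithin] with y hy hy'
    rw [slope_def_field, h1, sub_zero] at hy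
    have hyx : 0 < y - x₀ := sub_pos.2 hy'
    have := mul_pos hy hyx
    rwa [div_mul_cancel₀ _ (ne_of_gt hyx)] at this
  obtain ⟨u, hu, hsub⟩ := mem_nhdsGT_iff_exists_Ioo_subset.1 hev2
  have hmono2 : StrictMonoOn f (Icc x₀ u) := by
    apply strictMonoOn_of_deriv_pos (convex_Icc _ _)
    · exact fun z _ => (hd z).continuousAt.continuousWithinAt
    · intro z hz
      rw [interior_Icc] at hz
      exact hsub hz
  have hlt : f x₀ < f u :=
    hmono2 (left_mem_Icc.2 (le_of_lt hu)) (right_mem_Icc.2 (le_of_lt hu)) hu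
  exact absurd (hmax u) (not_le.2 hlt)

lemma reaction_neg {α β K M ε μ r a c D P : ℝ}
    (hα : 0 < α) (hβ : 0 < β) (hK : 0 < K) (hμ0 : 0 ≤ μ)
    (hαμ : 0 < α * (1 - μ)) (hMβ : α * (1 - μ) * M = β)
    (hM0 : 0 < M) (hε : 0 < ε) (hr : M + ε ≤ r)
    (ha : 0 ≤ a) (hc : 0 ≤ c) (hD : D ≤ 0)
    (hP : P = β * r * (1 - a * r / K) - α * r ^ 2 + μ * α * r * (r - c) + D) :
    P < 0 := by
  have hμα : 0 ≤ μ * α := mul_nonneg hμ0 hα.le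
  have hr0 : 0 < r := by linarith
  have hb1 : β * r * (1 - a * r / K) ≤ β * r := by
    have h1 : 0 ≤ a * r / K := by positivity
    nlinarith [mul_nonneg (mul_nonneg hβ.le hr0.le) h1]
  have hb2 : μ * α * r * (r - c) ≤ μ * α * r ^ 2 := by
    nlinarith [mul_nonneg (mul_nonneg hμα hr0.le) hc]
  have h6 : 0 < α * (1 - μ) * r - β := by
    nlinarith [mul_le_mul_of_nonneg_left hr hαμ.le]
  nlinarith [mul_pos hr0 h6]


/-- uniform L∞ bound (Lemma 4.1). For a nonnegative classical solution whose
initial density is bounded by `β/(α(1-μ))`, the density stays below that threshold. -/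
theorem density_uniform_bound
    (α β βt K Kt L μ : ℝ) (Γ : ℝ → ℝ)
    (hα : 0 < α) (hβ : 0 < β) (hβt : 0 < βt) (hK : 0 < K) (hKt : 0 < Kt) (hL : 0 < L)
    (hμ0 : 0 ≤ μ) (hμ1 : μ < 1)
    (hΓint : Integrable Γ) (hΓeven : ∀ x : ℝ, Γ (-x) = Γ x)
    (hΓpos : ∀ᵐ x : ℝ ∂(volume : Measure ℝ), 0 ≤ Γ x)
    (T : ℝ) (hT : 0 < T)
    (A ρ : ℝ → ℝ → ℝ)
    (hsol : IsClassicalSolution α β βt K Kt L μ Γ (Ico 0 T) A ρ)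
    (hA : ∀ t ∈ Ico (0:ℝ) T, ∀ x : ℝ, 0 ≤ A t x)
    (hρ : ∀ t ∈ Ico (0:ℝ) T, ∀ x : ℝ, 0 ≤ ρ t x)
    (hsup : ∀ x : ℝ, ρ 0 x ≤ β / (α * (1 - μ))) :
    ∀ t ∈ Ico (0:ℝ) T, ∀ x : ℝ, ρ t x ≤ β / (α * (1 - μ)) := by
  set M : ℝ := β / (α * (1 - μ)) with hM
  have h1μ : 0 < 1 - μ := by linarith
  have hαμ : 0 < α * (1 - μ) := mul_pos hα h1μ
  have hMβ : α * (1 - μ) * M = β := by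
    rw [hM]; field_simp
  have h2L : 0 < 2 * L := by linarith
  intro t ht x
  -- reduce to showing ρ t x ≤ M + ε for all ε > 0
  refine le_of_forall_pos_le_add ?_
  intro ε hε
  by_contra hcon
  push_neg at hcon
  -- the "bad" compact set
  set Q : Set (ℝ × ℝ) := Icc 0 t ×ˢ Icc 0 (2 * L) with hQ
  have hQc : IsCompact Q := isCompact_Icc.prod isCompact_Icc
  have hQcl : IsClosed Q := isClosed_Icc.prod isClosed_Icc
  have hsubJ : Icc (0:ℝ) t ⊆ Ico 0 T := fun s hs => ⟨hs.1, lt_of_le_of_lt hs.2 ht.2⟩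
  have hQsub : Q ⊆ Ico 0 T ×ˢ (univ : Set ℝ) := fun p hp => ⟨hsubJ hp.1, mem_univ _⟩
  have hcQ : ContinuousOn (Function.uncurry ρ) Q := hsol.contρ.mono hQsub
  set C : Set (ℝ × ℝ) := Q ∩ (Function.uncurry ρ) ⁻¹' Ici (M + ε) with hC
  have hCc : IsCompact C := hQc.of_isClosed_subset
    (hcQ.preimage_isClosed_of_isClosed hQcl isClosed_Ici) inter_subset_left
  -- C is nonempty: reduce x into the periodic cell
  obtain ⟨x₁, hx₁, hx₁eq⟩ := periodic_reduce h2L (hsol.periodicρ t ht) x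
  have hCne : C.Nonempty := ⟨(t, x₁), ⟨⟨right_mem_Icc.2 ht.1, hx₁⟩, by
    simp only [mem_preimage, mem_Ici, Function.uncurry_apply_pair]
    rw [hx₁eq]; exact hcon.le⟩⟩
  -- the first bad time
  set S : Set ℝ := Prod.fst '' C with hS
  have hSc : IsCompact S := hCc.image continuous_fst
  have hSne : S.Nonempty := hCne.image _
  set t₀ : ℝ := sInf S with ht₀def
  have ht₀S : t₀ ∈ S := hSc.sInf_mem hSne
  obtain ⟨⟨t₀', y₀⟩, hmemC, ht₀'⟩ := ht₀S
  have ht₀e : t₀' = t₀ := ht₀'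
  have hy₀cell : y₀ ∈ Icc 0 (2 * L) := hmemC.1.2
  have ht₀Icc : t₀ ∈ Icc 0 t := ht₀e ▸ hmemC.1.1
  have ht₀J : t₀ ∈ Ico 0 T := hsubJ ht₀Icc
  have hy₀ : M + ε ≤ ρ t₀ y₀ := by
    have h := hmemC.2
    simp only [mem_preimage, mem_Ici, Function.uncurry_apply_pair] at h
    rwa [ht₀e] at h
  -- continuity of ρ t₀
  have hcρt₀ : Continuous (ρ t₀) := by
    rw [← continuousOn_univ]
    have : ContinuousOn (fun y : ℝ => Function.uncurry ρ (t₀, y)) univ :=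
      hsol.contρ.comp (Continuous.continuousOn (by fun_prop))
        (fun y _ => ⟨ht₀J, mem_univ y⟩)
    exact this
  -- the spatial maximum point
  obtain ⟨x₀, hx₀cell, hx₀max⟩ :=
    isCompact_Icc.exists_isMaxOn ⟨y₀, hy₀cell⟩ hcρt₀.continuousOn
  have hρmax : ∀ y, ρ t₀ y ≤ ρ t₀ x₀ := by
    intro y
    obtain ⟨y', hy', hy'eq⟩ := periodic_reduce h2L (hsol.periodicρ t₀ ht₀J) y
    rw [← hy'eq]
    exact hx₀max hy'
  have hge : M + ε ≤ ρ t₀ x₀ := le_trans hy₀ (hx₀max hy₀cell)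
  -- t₀ is positive
  have ht₀pos : 0 < t₀ := by
    rcases lt_or_eq_of_le ht₀Icc.1 with h | h
    · exact h
    · exfalso
      have := hsup x₀
      rw [← h] at hge
      linarith
  -- the past is strictly below M + ε
  have hpast : ∀ s, 0 ≤ s → s < t₀ → ρ s x₀ < ρ t₀ x₀ := by
    intro s hs0 hst₀
    obtain ⟨y', hy', hy'eq⟩ := periodic_reduce h2L
      (hsol.periodicρ s (hsubJ ⟨hs0, le_trans hst₀.le ht₀Icc.2⟩)) x₀
    by_contra hcc
    push_neg at hcc
    have hval : M + ε ≤ ρ s y' := by rw [hy'eq]; linarith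
    have hmemS : s ∈ S := ⟨(s, y'), ⟨⟨⟨hs0, le_trans hst₀.le ht₀Icc.2⟩, hy'⟩, by
      simpa only [mem_preimage, mem_Ici, Function.uncurry_apply_pair] using hval⟩, rfl⟩
    exact absurd (csInf_le hSc.bddBelow hmemS) (not_le.2 hst₀)
  -- time derivative nonneg at (t₀, x₀)
  have hdt : 0 ≤ pd_t ρ t₀ x₀ :=
    deriv_nonneg_of_past_lt ht₀pos (hsol.diffρ_t t₀ ht₀J x₀) hpast
  -- spatial derivatives
  have hfd : ∀ y : ℝ, DifferentiableAt ℝ (ρ t₀) y := hsol.diffρ_x t₀ ht₀J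
  have hfd2 : DifferentiableAt ℝ (deriv (ρ t₀)) x₀ := hsol.diffρ_xx t₀ ht₀J x₀
  have h'0 : deriv (ρ t₀) x₀ = 0 := by
    have : IsLocalMax (ρ t₀) x₀ := Filter.Eventually.of_forall hρmax
    exact this.deriv_eq_zero
  have h''le : deriv (deriv (ρ t₀)) x₀ ≤ 0 :=
    secondDeriv_nonpos_at_max hfd hfd2 hρmax
  -- the diffusion term
  have hdiffeq : pd_x (fun s y => ρ s y * pd_x ρ s y) t₀ x₀
      = deriv (ρ t₀) x₀ * deriv (ρ t₀) x₀ + ρ t₀ x₀ * deriv (deriv (ρ t₀)) x₀ := by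
    show deriv (fun y => ρ t₀ y * deriv (ρ t₀) y) x₀ = _
    exact deriv_mul (hfd x₀) hfd2
  have hdiff : pd_x (fun s y => ρ s y * pd_x ρ s y) t₀ x₀ ≤ 0 := by
    rw [hdiffeq, h'0]
    have := mul_nonpos_of_nonneg_of_nonpos (hρ t₀ ht₀J x₀) h''le
    linarith
  -- the convolution term is nonnegative
  have hconv : 0 ≤ convAvg Γ ρ t₀ x₀ := by
    apply integral_nonneg_of_ae
    have hΓ' : ∀ᵐ y : ℝ ∂volume, 0 ≤ Γ (x₀ - y) :=
      (Measure.measurePreserving_sub_left volume x₀).quasiMeasurePreserving.ae hΓpos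
    filter_upwards [hΓ'] with y hy
    exact mul_nonneg hy (hρ t₀ ht₀J y)
  -- plug into the equation
  have heq := hsol.eqρ t₀ ht₀J x₀
  have hM0 : 0 < M := by rw [hM]; positivity
  have ha0 : 0 ≤ A t₀ x₀ := hA t₀ ht₀J x₀
  have hlt0 : pd_t ρ t₀ x₀ < 0 :=
    reaction_neg hα hβ hK hμ0 hαμ hMβ hM0 hε hge ha0 hconv hdiff heq
  linarith
end

section
/- Fix parameters α, β, β̃, K, K̃, L > 0 and μ ∈ [0,1), and an even kernel Γ ∈ L¹(ℝ). Let T > 0 and let (A,ρ) be a classical solution of the cross-diffusion system on [0,T) with C⁴ spatial regularity such that A ≥ 0 and ρ ≥ 0 on [0,T)×ℝ, and suppose that for every t ∈ [0,T) one has ρ(t,0) = 0, ∂_xρ(t,0) = 0 and ∂_x²ρ(t,0) ≥ 0. Then for every t ∈ [0,T): ∂_t∂_x²ρ(t,0) ≥ (∂_x²ρ(t,0))² − αμ · ∂_x²ρ(t,0) · ⟨ρ⟩(t,0). -/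
open MeasureTheory Set Function

lemma myBounded {g : ℝ → ℝ} {p : ℝ} (hp : 0 < p)
    (hg : Continuous g) (hper : Function.Periodic g p) : ∃ M, ∀ x, |g x| ≤ M := by
  obtain ⟨M, hM⟩ := (isCompact_Icc (a := (0:ℝ)) (b := p)).exists_bound_of_continuousOn
    hg.continuousOn
  refine ⟨M, fun x => ?_⟩
  obtain ⟨y, hy, hxy⟩ := hper.exists_mem_Ico₀ hp x
  rw [hxy]
  simpa using hM y (Ico_subset_Icc_self hy)

lemma mySlice {J : Set ℝ} {g : ℝ → ℝ → ℝ}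
    (hg : ContinuousOn (Function.uncurry g) (J ×ˢ (univ : Set ℝ))) {t : ℝ} (ht : t ∈ J) :
    Continuous (g t) := by
  rw [← continuousOn_univ]
  exact hg.comp ((continuous_const.prodMk continuous_id).continuousOn)
    (fun x _ => ⟨ht, mem_univ x⟩)

lemma myPeriodicDeriv {g : ℝ → ℝ} {p : ℝ} (hper : Function.Periodic g p) :
    Function.Periodic (deriv g) p := by
  intro x
  have h : (fun y => g (y + p)) = g := funext hper
  calc deriv g (x + p) = deriv (fun y => g (y + p)) x := (deriv_comp_add_const g p x).symm
    _ = deriv g x := by rw [h]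

lemma convAvg_eq (Γ : ℝ → ℝ) (ρ : ℝ → ℝ → ℝ) (t x : ℝ) :
    convAvg Γ ρ t x = ∫ z : ℝ, Γ z * ρ t (x - z) := by
  have h := MeasureTheory.integral_sub_left_eq_self
    (fun y => Γ (x - y) * ρ t y) (volume : Measure ℝ) x
  unfold convAvg
  rw [← h]
  congr 1
  funext z
  simp

lemma myConvDeriv (Γ : ℝ → ℝ) (hΓ : Integrable Γ)
    (g g' : ℝ → ℝ) (hgc : Continuous g) (hg'c : Continuous g')
    (hd : ∀ x, HasDerivAt g (g' x) x)
    (Mg : ℝ) (hMg : ∀ x, |g x| ≤ Mg)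
    (M : ℝ) (hM : ∀ x, |g' x| ≤ M) (x₀ : ℝ) :
    HasDerivAt (fun x => ∫ z : ℝ, Γ z * g (x - z)) (∫ z : ℝ, Γ z * g' (x₀ - z)) x₀ := by
  have hint : Integrable (fun z => Γ z * g (x₀ - z)) := by
    have h1 : Integrable (fun z => g (x₀ - z) * Γ z) :=
      hΓ.bdd_mul (c := Mg) ((hgc.comp (continuous_const.sub continuous_id)).aestronglyMeasurable)
        (Filter.Eventually.of_forall fun z => by simpa [Real.norm_eq_abs] using hMg (x₀ - z))
    exact h1.congr (Filter.Eventually.of_forall fun z => mul_comm _ _)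
  have key := hasDerivAt_integral_of_dominated_loc_of_deriv_le
    (F := fun (x : ℝ) (z : ℝ) => Γ z * g (x - z))
    (F' := fun (x : ℝ) (z : ℝ) => Γ z * g' (x - z))
    (x₀ := x₀) (s := Metric.ball x₀ 1) (bound := fun z => |Γ z| * M) (μ := volume)
    (Metric.ball_mem_nhds x₀ one_pos)
    (Filter.Eventually.of_forall (fun x => hΓ.aestronglyMeasurable.mul
      ((hgc.comp (continuous_const.sub continuous_id)).aestronglyMeasurable)))
    hint
    (hΓ.aestronglyMeasurable.mul
      ((hg'c.comp (continuous_const.sub continuous_id)).aestronglyMeasurable))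
    (Filter.Eventually.of_forall (fun z x _ => by
      have h0 : 0 ≤ |Γ z| := abs_nonneg _
      calc ‖Γ z * g' (x - z)‖ = |Γ z| * |g' (x - z)| := by
            simp [Real.norm_eq_abs, abs_mul]
        _ ≤ |Γ z| * M := mul_le_mul_of_nonneg_left (hM _) h0))
    ((hΓ.norm.mul_const M).congr (Filter.Eventually.of_forall fun z => by
      simp [Real.norm_eq_abs]))
    (Filter.Eventually.of_forall (fun z x _ =>
      (((hd (x - z)).comp x ((hasDerivAt_id x).sub_const z)).const_mul (Γ z)).congr_deriv
        (by ring)))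
  exact key.2

/-- the key differential inequality (4.4) at the origin. If `ρ(t,0) = 0`,
`∂ₓρ(t,0) = 0` and `∂ₓ²ρ(t,0) ≥ 0` for all `t ∈ [0,T)`, then
`∂ₜ∂ₓ²ρ(t,0) ≥ (∂ₓ²ρ(t,0))² − αμ ∂ₓ²ρ(t,0) ⟨ρ⟩(t,0)`. -/
theorem second_derivative_inequality
    (α β βt K Kt L μ : ℝ) (Γ : ℝ → ℝ)
    (hα : 0 < α) (hβ : 0 < β) (hβt : 0 < βt) (hK : 0 < K) (hKt : 0 < Kt) (hL : 0 < L)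
    (hμ0 : 0 ≤ μ) (hμ1 : μ < 1)
    (hΓint : Integrable Γ) (hΓeven : ∀ x : ℝ, Γ (-x) = Γ x)
    (T : ℝ) (hT : 0 < T)
    (A ρ : ℝ → ℝ → ℝ)
    (hsol : IsClassicalSolution α β βt K Kt L μ Γ (Ico 0 T) A ρ)
    (hreg : HasC4SpatialRegularity (Ico 0 T) ρ)
    (hA : ∀ t ∈ Ico (0:ℝ) T, ∀ x : ℝ, 0 ≤ A t x)
    (hρ : ∀ t ∈ Ico (0:ℝ) T, ∀ x : ℝ, 0 ≤ ρ t x)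
    (hzero : ∀ t ∈ Ico (0:ℝ) T, ρ t 0 = 0)
    (hdx : ∀ t ∈ Ico (0:ℝ) T, pd_x ρ t 0 = 0)
    (hdxx : ∀ t ∈ Ico (0:ℝ) T, 0 ≤ pd_x (pd_x ρ) t 0) :
    ∀ t ∈ Ico (0:ℝ) T,
      pd_t (pd_x (pd_x ρ)) t 0 ≥
        (pd_x (pd_x ρ) t 0) ^ 2 - α * μ * pd_x (pd_x ρ) t 0 * convAvg Γ ρ t 0 := by
  intro t ht
  have hL2 : (0:ℝ) < 2 * L := by linarith
  set f : ℝ → ℝ := ρ t with hfdef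
  set f1 : ℝ → ℝ := deriv f with hf1def
  set f2 : ℝ → ℝ := deriv f1 with hf2def
  set f3 : ℝ → ℝ := deriv f2 with hf3def
  set a : ℝ → ℝ := A t with hadef
  set a1 : ℝ → ℝ := deriv a with ha1def
  set h : ℝ → ℝ := fun x => ∫ z : ℝ, Γ z * f (x - z) with hhdef
  set h1 : ℝ → ℝ := fun x => ∫ z : ℝ, Γ z * f1 (x - z) with hh1def
  -- continuity
  have hcf : Continuous f := mySlice hsol.contρ ht
  have hcf1 : Continuous f1 := mySlice hsol.cont_dxρ ht
  have hcf2 : Continuous f2 := mySlice hsol.cont_dxxρ ht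
  -- periodicity and bounds
  have hperf : Function.Periodic f (2 * L) := fun x => hsol.periodicρ t ht x
  have hperf1 : Function.Periodic f1 (2 * L) := myPeriodicDeriv hperf
  have hperf2 : Function.Periodic f2 (2 * L) := myPeriodicDeriv hperf1
  obtain ⟨M0, hM0⟩ := myBounded hL2 hcf hperf
  obtain ⟨M1, hM1⟩ := myBounded hL2 hcf1 hperf1
  obtain ⟨M2, hM2⟩ := myBounded hL2 hcf2 hperf2
  -- derivatives
  have hdf : ∀ x, HasDerivAt f (f1 x) x := fun x => (hsol.diffρ_x t ht x).hasDerivAt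
  have hdf1 : ∀ x, HasDerivAt f1 (f2 x) x := fun x => (hsol.diffρ_xx t ht x).hasDerivAt
  have hdf2 : ∀ x, HasDerivAt f2 (f3 x) x := fun x => (hreg.diff_x3 t ht x).hasDerivAt
  have hdf3 : ∀ x, HasDerivAt f3 (deriv f3 x) x := fun x => (hreg.diff_x4 t ht x).hasDerivAt
  have hda : ∀ x, HasDerivAt a (a1 x) x := fun x => (hsol.diffA_x t ht x).hasDerivAt
  have hda1 : ∀ x, HasDerivAt a1 (deriv a1 x) x := fun x => (hsol.diffA_xx t ht x).hasDerivAt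
  have hdh : ∀ x, HasDerivAt h (h1 x) x :=
    fun x => myConvDeriv Γ hΓint f f1 hcf hcf1 hdf M0 hM0 M1 hM1 x
  have hdh1 : HasDerivAt h1 (∫ z : ℝ, Γ z * f2 (0 - z)) 0 :=
    myConvDeriv Γ hΓint f1 f2 hcf1 hcf2 hdf1 M1 hM1 M2 hM2 0
  -- values at zero
  have hz : f 0 = 0 := hzero t ht
  have hz1 : f1 0 = 0 := hdx t ht
  have hz2 : 0 ≤ f2 0 := hdxx t ht
  have hconv0 : convAvg Γ ρ t 0 = h 0 := convAvg_eq Γ ρ t 0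
  -- the derivative function
  set Φ' : ℝ → ℝ := fun x => β * f1 x * (1 - a x * f x / K)
      - β * f x * ((a1 x * f x + a x * f1 x) / K)
      - 2 * α * f x * f1 x
      + μ * α * f1 x * (f x - h x)
      + μ * α * f x * (f1 x - h1 x)
      + 3 * f1 x * f2 x + f x * f3 x with hΦ'def
  have hΦ : ∀ x, HasDerivAt (fun y => β * f y * (1 - a y * f y / K) - α * f y ^ 2
      + μ * α * f y * (f y - h y) + (f1 y * f1 y + f y * f2 y)) (Φ' x) x := by
    intro x
    have C := (((((hdf x).const_mul β).mul ((((hda x).mul (hdf x)).div_const K).const_sub 1)).sub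
        (((hdf x).pow 2).const_mul α)).add
        (((hdf x).const_mul (μ * α)).mul ((hdf x).sub (hdh x)))).add
        (((hdf1 x).mul (hdf1 x)).add ((hdf x).mul (hdf2 x)))
    exact C.congr_deriv (by simp only [hΦ'def, Pi.mul_apply, Pi.sub_apply]; ring)
  have hΦeq : (fun y => pd_t ρ t y) = (fun y => β * f y * (1 - a y * f y / K) - α * f y ^ 2
      + μ * α * f y * (f y - h y) + (f1 y * f1 y + f y * f2 y)) := by
    funext x
    have e : pd_x (fun s y => ρ s y * pd_x ρ s y) t x = f1 x * f1 x + f x * f2 x :=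
      ((hdf x).mul (hdf1 x)).deriv
    have e2 : convAvg Γ ρ t x = h x := convAvg_eq Γ ρ t x
    rw [hsol.eqρ t ht x, e, e2]
  have e1 : (fun y => pd_x (pd_t ρ) t y) = Φ' := by
    funext x
    show deriv (fun y => pd_t ρ t y) x = Φ' x
    rw [hΦeq]
    exact (hΦ x).deriv
  have hΦ'0 : HasDerivAt Φ' (β * f2 0 + 3 * f2 0 ^ 2 - μ * α * f2 0 * h 0) 0 := by
    have C := ((((((((hdf1 0).const_mul β).mul
        ((((hda 0).mul (hdf 0)).div_const K).const_sub 1)).sub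
      (((hdf 0).const_mul β).mul
        ((((hda1 0).mul (hdf 0)).add ((hda 0).mul (hdf1 0))).div_const K))).sub
      (((hdf 0).const_mul (2 * α)).mul (hdf1 0))).add
      (((hdf1 0).const_mul (μ * α)).mul ((hdf 0).sub (hdh 0)))).add
      (((hdf 0).const_mul (μ * α)).mul ((hdf1 0).sub hdh1))).add
      (((hdf1 0).const_mul 3).mul (hdf2 0))).add
      ((hdf 0).mul (hdf3 0))
    exact C.congr_deriv (by simp only [Pi.mul_apply, Pi.sub_apply, Pi.add_apply]; rw [hz, hz1]; ring)
  have key : pd_t (pd_x (pd_x ρ)) t 0 = β * f2 0 + 3 * f2 0 ^ 2 - μ * α * f2 0 * h 0 := by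
    rw [hreg.commute t ht 0]
    show deriv (fun y => pd_x (pd_t ρ) t y) 0 = _
    rw [e1]
    exact hΦ'0.deriv
  have e3 : pd_x (pd_x ρ) t 0 = f2 0 := rfl
  rw [key, e3, hconv0]
  nlinarith [mul_nonneg hβ.le hz2, sq_nonneg (f2 0)]
end

section
/- Fix parameters α, β, β̃, K, K̃, L > 0 and μ ∈ [0,1), and an even kernel Γ ∈ L¹(ℝ). Let T > 0 and let (A,ρ) be a classical solution of the cross-diffusion system on [0,T) with ρ ≥ 0 on [0,T)×ℝ, and suppose that for every T' ∈ (0,T) there exists a constant C(T') ≥ 0 such that (∂_xρ(t,x))² ≤ C(T') · ρ(t,x) for all (t,x) ∈ [0,T'] × ℝ. Then for every t ∈ [0,T) and every x ∈ ℝ, ρ(t,x) = 0 if and only if ρ(0,x) = 0; in particular the support of ρ(t,·) equals the support of ρ(0,·) for all t ∈ [0,T). -/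
open MeasureTheory Set Function

/-- Gronwall upper bound. -/
lemma gron_upper {f : ℝ → ℝ} {M t : ℝ} (ht : 0 ≤ t)
    (hd : ∀ s ∈ Set.Icc (0:ℝ) t, DifferentiableAt ℝ f s)
    (hb : ∀ s ∈ Set.Icc (0:ℝ) t, deriv f s ≤ M * f s) :
    f t ≤ f 0 * Real.exp (M * t) := by
  set g : ℝ → ℝ := fun s => f s * Real.exp (-M * s) with hgdef
  have hgd : ∀ s ∈ Set.Icc (0:ℝ) t,
      HasDerivAt g ((deriv f s - M * f s) * Real.exp (-M * s)) s := by
    intro s hs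
    have h1 : HasDerivAt f (deriv f s) s := (hd s hs).hasDerivAt
    have h2 : HasDerivAt (fun u => Real.exp (-M * u)) (Real.exp (-M * s) * (-M)) s := by
      simpa using (((hasDerivAt_id s).const_mul (-M)).exp)
    have h3 := h1.fun_mul h2
    exact h3.congr_deriv (by ring)
  have hanti : AntitoneOn g (Set.Icc 0 t) := by
    apply antitoneOn_of_deriv_nonpos (convex_Icc 0 t)
    · exact fun s hs => ((hgd s hs).continuousAt).continuousWithinAt
    · intro s hs
      exact ((hgd s (interior_subset hs)).differentiableAt).differentiableWithinAt
    · intro s hs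
      rw [(hgd s (interior_subset hs)).deriv]
      have h4 := hb s (interior_subset hs)
      have h5 : deriv f s - M * f s ≤ 0 := by linarith
      exact mul_nonpos_of_nonpos_of_nonneg h5 (Real.exp_pos _).le
  have h6 : g t ≤ g 0 := hanti (left_mem_Icc.mpr ht) (right_mem_Icc.mpr ht) ht
  have h7 : g 0 = f 0 := by simp [hgdef]
  have h8 : f t = g t * Real.exp (M * t) := by
    simp only [hgdef, mul_assoc, ← Real.exp_add]
    ring_nf
    simp
  rw [h8]
  calc g t * Real.exp (M * t) ≤ g 0 * Real.exp (M * t) := by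
        exact mul_le_mul_of_nonneg_right h6 (Real.exp_pos _).le
    _ = f 0 * Real.exp (M * t) := by rw [h7]

/-- Gronwall lower bound. -/
lemma gron_lower {f : ℝ → ℝ} {M t : ℝ} (ht : 0 ≤ t)
    (hd : ∀ s ∈ Set.Icc (0:ℝ) t, DifferentiableAt ℝ f s)
    (hb : ∀ s ∈ Set.Icc (0:ℝ) t, -(M * f s) ≤ deriv f s) :
    f 0 ≤ f t * Real.exp (M * t) := by
  set g : ℝ → ℝ := fun s => f s * Real.exp (M * s) with hgdef
  have hgd : ∀ s ∈ Set.Icc (0:ℝ) t,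
      HasDerivAt g ((deriv f s + M * f s) * Real.exp (M * s)) s := by
    intro s hs
    have h1 : HasDerivAt f (deriv f s) s := (hd s hs).hasDerivAt
    have h2 : HasDerivAt (fun u => Real.exp (M * u)) (Real.exp (M * s) * M) s := by
      simpa using (((hasDerivAt_id s).const_mul M).exp)
    have h3 := h1.fun_mul h2
    exact h3.congr_deriv (by ring)
  have hmono : MonotoneOn g (Set.Icc 0 t) := by
    apply monotoneOn_of_deriv_nonneg (convex_Icc 0 t)
    · exact fun s hs => ((hgd s hs).continuousAt).continuousWithinAt
    · intro s hs
      exact ((hgd s (interior_subset hs)).differentiableAt).differentiableWithinAt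
    · intro s hs
      rw [(hgd s (interior_subset hs)).deriv]
      have h4 := hb s (interior_subset hs)
      have h5 : 0 ≤ deriv f s + M * f s := by linarith
      exact mul_nonneg h5 (Real.exp_pos _).le
  have h6 : g 0 ≤ g t := hmono (left_mem_Icc.mpr ht) (right_mem_Icc.mpr ht) ht
  have h7 : g 0 = f 0 := by simp [hgdef]
  rw [← h7]
  exact h6

/-- Uniform bound from continuity + periodicity. -/
lemma bound_of_periodic {F : ℝ → ℝ → ℝ} {T T' L : ℝ} (hL : 0 < L) (hT'T : T' < T)
    (hc : ContinuousOn (Function.uncurry F) (Set.Ico 0 T ×ˢ (Set.univ : Set ℝ)))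
    (hp : ∀ s ∈ Set.Ico (0:ℝ) T, Function.Periodic (F s) (2 * L)) :
    ∃ M : ℝ, 0 ≤ M ∧ ∀ s ∈ Set.Icc (0:ℝ) T', ∀ y : ℝ, |F s y| ≤ M := by
  have hcomp : IsCompact (Set.Icc (0:ℝ) T' ×ˢ Set.Icc (0:ℝ) (2 * L)) :=
    isCompact_Icc.prod isCompact_Icc
  have hsub : Set.Icc (0:ℝ) T' ×ˢ Set.Icc (0:ℝ) (2 * L) ⊆
      Set.Ico 0 T ×ˢ (Set.univ : Set ℝ) := by
    rintro ⟨s, y⟩ ⟨hs, _⟩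
    exact ⟨⟨hs.1, lt_of_le_of_lt hs.2 hT'T⟩, trivial⟩
  obtain ⟨M, hM⟩ := hcomp.exists_bound_of_continuousOn (hc.mono hsub)
  refine ⟨max M 0, le_max_right _ _, fun s hs y => ?_⟩
  obtain ⟨y₀, hy₀, hFy⟩ := (hp s ⟨hs.1, lt_of_le_of_lt hs.2 hT'T⟩).exists_mem_Ico₀
    (by positivity) y
  have := hM (s, y₀) ⟨hs, Set.mem_Icc_of_Ico hy₀⟩
  rw [hFy]
  calc |F s y₀| = ‖Function.uncurry F (s, y₀)‖ := rfl
    _ ≤ M := this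
    _ ≤ max M 0 := le_max_left _ _

lemma periodic_deriv' {f : ℝ → ℝ} {c : ℝ} (h : Function.Periodic f c) :
    Function.Periodic (deriv f) c := by
  intro x
  have hfun : (fun y => f (y + c)) = f := funext h
  rw [← deriv_comp_add_const, hfun]

/-- invariance of the support of the density (Proposition 5.1), under the
`√ρ ∈ H²` hypothesis encoded as `(∂ₓρ)² ≤ C·ρ` locally uniformly in time. -/
theorem support_invariance
    (α β βt K Kt L μ : ℝ) (Γ : ℝ → ℝ)
    (hα : 0 < α) (hβ : 0 < β) (hβt : 0 < βt) (hK : 0 < K) (hKt : 0 < Kt) (hL : 0 < L)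
    (hμ0 : 0 ≤ μ) (hμ1 : μ < 1)
    (hΓint : Integrable Γ) (hΓeven : ∀ x : ℝ, Γ (-x) = Γ x)
    (T : ℝ) (hT : 0 < T)
    (A ρ : ℝ → ℝ → ℝ)
    (hsol : IsClassicalSolution α β βt K Kt L μ Γ (Ico 0 T) A ρ)
    (hρ : ∀ t ∈ Ico (0:ℝ) T, ∀ x : ℝ, 0 ≤ ρ t x)
    (hroot : ∀ T' ∈ Ioo (0:ℝ) T, ∃ C : ℝ, 0 ≤ C ∧
      ∀ t ∈ Icc (0:ℝ) T', ∀ x : ℝ, (pd_x ρ t x) ^ 2 ≤ C * ρ t x) :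
    (∀ t ∈ Ico (0:ℝ) T, ∀ x : ℝ, (ρ t x = 0 ↔ ρ 0 x = 0)) ∧
      (∀ t ∈ Ico (0:ℝ) T, Function.support (ρ t) = Function.support (ρ 0)) := by
  have key : ∀ t ∈ Ico (0:ℝ) T, ∀ x : ℝ, (ρ t x = 0 ↔ ρ 0 x = 0) := by
    intro t ht x
    have ht0 : 0 ≤ t := ht.1
    have htT : t < T := ht.2
    set T' := (t + T) / 2 with hT'def
    have hT'pos : 0 < T' := by rw [hT'def]; linarith
    have htT' : t ≤ T' := by rw [hT'def]; linarith
    have hT'T : T' < T := by rw [hT'def]; linarith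
    obtain ⟨C, hC0, hCb⟩ := hroot T' ⟨hT'pos, hT'T⟩
    obtain ⟨MA, hMA0, hMA⟩ := bound_of_periodic hL hT'T hsol.contA
      (fun s hs y => hsol.periodicA s hs y)
    obtain ⟨Mρ, hMρ0, hMρ⟩ := bound_of_periodic hL hT'T hsol.contρ
      (fun s hs y => hsol.periodicρ s hs y)
    have hperxx : ∀ s ∈ Ico (0:ℝ) T, Function.Periodic (pd_x (pd_x ρ) s) (2 * L) := by
      intro s hs
      have h1 : Function.Periodic (ρ s) (2 * L) := fun y => hsol.periodicρ s hs y
      have h2 : Function.Periodic (deriv (deriv (ρ s))) (2 * L) :=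
        periodic_deriv' (periodic_deriv' h1)
      intro y
      show deriv (fun y' => pd_x ρ s y') (y + 2 * L) = deriv (fun y' => pd_x ρ s y') y
      have hpd : (fun y' => pd_x ρ s y') = deriv (ρ s) := rfl
      rw [hpd]
      exact h2 y
    obtain ⟨Mxx, hMxx0, hMxx⟩ := bound_of_periodic hL hT'T hsol.cont_dxxρ hperxx
    set Mc := Mρ * ∫ z, |Γ z| with hMcdef
    have hMc0 : 0 ≤ Mc := mul_nonneg hMρ0 (integral_nonneg fun z => abs_nonneg _)
    have hMc : ∀ s ∈ Icc (0:ℝ) T', ∀ y : ℝ, |convAvg Γ ρ s y| ≤ Mc := by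
      intro s hs y
      have hint : Integrable (fun z => |Γ (y - z)| * Mρ) :=
        ((hΓint.abs).comp_sub_left y).mul_const Mρ
      have hb : ∀ z : ℝ, ‖Γ (y - z) * ρ s z‖ ≤ |Γ (y - z)| * Mρ := by
        intro z
        rw [Real.norm_eq_abs, abs_mul]
        exact mul_le_mul_of_nonneg_left (hMρ s hs z) (abs_nonneg _)
      calc |convAvg Γ ρ s y| ≤ ∫ z, |Γ (y - z)| * Mρ :=
            norm_integral_le_of_norm_le hint (Filter.Eventually.of_forall hb)
        _ = (∫ z, |Γ (y - z)|) * Mρ := by rw [integral_mul_const]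
        _ = (∫ z, |Γ z|) * Mρ := by
            rw [integral_sub_left_eq_self (fun z => |Γ z|) volume y]
        _ = Mc := by rw [hMcdef]; ring
    set M₀ := β * (1 + MA * Mρ / K) + α * Mρ + μ * α * (Mρ + Mc) + Mxx with hM₀def
    have hM₀0 : 0 ≤ M₀ := by
      have h1 : 0 ≤ MA * Mρ / K := by positivity
      have h2 : 0 ≤ μ * α * (Mρ + Mc) := by positivity
      have h3 : 0 ≤ β * (1 + MA * Mρ / K) := by positivity
      rw [hM₀def]
      have h4 : 0 ≤ α * Mρ := by positivity
      linarith
    set M := M₀ + C with hMdef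
    -- pointwise bound on the "G" factor
    have hG : ∀ s ∈ Icc (0:ℝ) t, |β * (1 - A s x * ρ s x / K) - α * ρ s x
        + μ * α * (ρ s x - convAvg Γ ρ s x) + pd_x (pd_x ρ) s x| ≤ M₀ := by
      intro s hs
      have hs' : s ∈ Icc (0:ℝ) T' := ⟨hs.1, le_trans hs.2 htT'⟩
      have h1 : |β * (1 - A s x * ρ s x / K)| ≤ β * (1 + MA * Mρ / K) := by
        rw [abs_mul, abs_of_pos hβ]
        have hz : |A s x * ρ s x / K| ≤ MA * Mρ / K := by
          rw [abs_div, abs_mul, abs_of_pos hK]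
          gcongr
          · exact hMA s hs' x
          · exact hMρ s hs' x
        have hz2 : |1 - A s x * ρ s x / K| ≤ 1 + MA * Mρ / K := by
          calc |1 - A s x * ρ s x / K| ≤ |(1:ℝ)| + |A s x * ρ s x / K| := abs_sub _ _
            _ ≤ 1 + MA * Mρ / K := by rw [abs_one]; linarith
        exact mul_le_mul_of_nonneg_left hz2 hβ.le
      have h2 : |α * ρ s x| ≤ α * Mρ := by
        rw [abs_mul, abs_of_pos hα]
        exact mul_le_mul_of_nonneg_left (hMρ s hs' x) hα.le
      have h3 : |μ * α * (ρ s x - convAvg Γ ρ s x)| ≤ μ * α * (Mρ + Mc) := by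
        rw [abs_mul, abs_mul, abs_of_nonneg hμ0, abs_of_pos hα]
        have hz : |ρ s x - convAvg Γ ρ s x| ≤ Mρ + Mc := by
          calc |ρ s x - convAvg Γ ρ s x| ≤ |ρ s x| + |convAvg Γ ρ s x| := abs_sub _ _
            _ ≤ Mρ + Mc := add_le_add (hMρ s hs' x) (hMc s hs' x)
        rw [mul_assoc, mul_assoc]
        exact mul_le_mul_of_nonneg_left
          (mul_le_mul_of_nonneg_left hz hα.le) hμ0
      have h4 : |pd_x (pd_x ρ) s x| ≤ Mxx := hMxx s hs' x
      rw [abs_le] at h1 h2 h3 h4 ⊢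
      constructor
      · rw [hM₀def]; linarith [h1.1, h2.2, h3.1, h4.1]
      · rw [hM₀def]; linarith [h1.2, h2.1, h3.2, h4.2]
    -- derivative identity
    have hderiv : ∀ s ∈ Icc (0:ℝ) t, deriv (fun s' => ρ s' x) s =
        ρ s x * (β * (1 - A s x * ρ s x / K) - α * ρ s x
          + μ * α * (ρ s x - convAvg Γ ρ s x) + pd_x (pd_x ρ) s x)
          + (pd_x ρ s x) ^ 2 := by
      intro s hs
      have hsJ : s ∈ Ico (0:ℝ) T := ⟨hs.1, lt_of_le_of_lt hs.2 htT⟩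
      have heq := hsol.eqρ s hsJ x
      have hprod : pd_x (fun s' y => ρ s' y * pd_x ρ s' y) s x
          = pd_x ρ s x * pd_x ρ s x + ρ s x * pd_x (pd_x ρ) s x := by
        show deriv (fun y => ρ s y * pd_x ρ s y) x = _
        rw [deriv_fun_mul (hsol.diffρ_x s hsJ x) (hsol.diffρ_xx s hsJ x)]
        rfl
      rw [hprod] at heq
      show pd_t ρ s x = _
      rw [heq]
      ring
    have hfd : ∀ s ∈ Icc (0:ℝ) t, DifferentiableAt ℝ (fun s' => ρ s' x) s :=
      fun s hs => hsol.diffρ_t s ⟨hs.1, lt_of_le_of_lt hs.2 htT⟩ x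
    have hub : ∀ s ∈ Icc (0:ℝ) t, deriv (fun s' => ρ s' x) s ≤ M * ρ s x := by
      intro s hs
      have hs' : s ∈ Icc (0:ℝ) T' := ⟨hs.1, le_trans hs.2 htT'⟩
      have hsJ : s ∈ Ico (0:ℝ) T := ⟨hs.1, lt_of_le_of_lt hs.2 htT⟩
      have hρnn : 0 ≤ ρ s x := hρ s hsJ x
      have hGb := (abs_le.mp (hG s hs)).2
      have hq := hCb s hs' x
      have hmul := mul_le_mul_of_nonneg_left hGb hρnn
      rw [hderiv s hs, hMdef]
      nlinarith
    have hlb : ∀ s ∈ Icc (0:ℝ) t, -(M * ρ s x) ≤ deriv (fun s' => ρ s' x) s := by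
      intro s hs
      have hsJ : s ∈ Ico (0:ℝ) T := ⟨hs.1, lt_of_le_of_lt hs.2 htT⟩
      have hρnn : 0 ≤ ρ s x := hρ s hsJ x
      have hGb := (abs_le.mp (hG s hs)).1
      have hq : 0 ≤ (pd_x ρ s x) ^ 2 := sq_nonneg _
      have hmul := mul_le_mul_of_nonneg_left hGb hρnn
      have hCρ : 0 ≤ C * ρ s x := mul_nonneg hC0 hρnn
      rw [hderiv s hs, hMdef]
      nlinarith
    have hup := gron_upper ht0 hfd hub
    have hlo := gron_lower ht0 hfd hlb
    have hft : 0 ≤ ρ t x := hρ t ht x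
    have hf0 : 0 ≤ ρ 0 x := hρ 0 ⟨le_refl 0, hT⟩ x
    constructor
    · intro h
      have : ρ 0 x ≤ 0 := by
        have := hlo
        simp only [h, zero_mul] at this
        exact this
      linarith
    · intro h
      have : ρ t x ≤ 0 := by
        have := hup
        simp only [h, zero_mul] at this
        exact this
      linarith
  refine ⟨key, fun t ht => ?_⟩
  ext x
  simp only [Function.mem_support, ne_eq]
  exact not_congr (key t ht x)
end

section
/- Fix parameters α, β, β̃, K, K̃, L > 0 and μ ∈ [0,1), and an even kernel Γ ∈ L¹(ℝ). Let T > 0 and let (A,ρ) be a classical solution of the cross-diffusion system on [0,T) with A ≥ 0 and ρ ≥ 0 on [0,T)×ℝ, and suppose A and ρ are bounded on [0,T)×ℝ. Define m_A(t) = inf_{x∈ℝ} A(t,x). Then there exists a constant C ≥ 0, depending only on α, μ, β̃, K̃, ‖Γ‖_{L¹}, ‖A‖_{L∞([0,T)×ℝ)} and ‖ρ‖_{L∞([0,T)×ℝ)}, such that m_A(t) ≥ m_A(0) · e^{−Ct} for all t ∈ [0,T). -/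
open MeasureTheory Set Function

open Filter Topology

lemma aux_left_deriv_nonpos {g : ℝ → ℝ} {a d : ℝ} (hd : HasDerivAt g d a)
    (h : ∀ᶠ t in 𝓝[<] a, g a ≤ g t) : d ≤ 0 := by
  have hs : Filter.Tendsto (slope g a) (𝓝[<] a) (𝓝 d) :=
    ((hasDerivAt_iff_tendsto_slope.mp hd).mono_left
      (nhdsWithin_mono a fun x hx => ne_of_lt hx))
  refine le_of_tendsto hs ?_
  filter_upwards [h, self_mem_nhdsWithin] with t hge (ht : t < a)
  rw [slope_def_field]
  have : (g t - g a) / (t - a) ≤ 0 :=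
    div_nonpos_of_nonneg_of_nonpos (by linarith) (by linarith)
  simpa [div_eq_inv_mul] using this

lemma aux_second_deriv_nonneg {g : ℝ → ℝ} {x : ℝ}
    (hdiff : ∀ y, DifferentiableAt ℝ g y)
    (hdiff2 : DifferentiableAt ℝ (deriv g) x)
    (hmin : ∀ y, g x ≤ g y) : 0 ≤ deriv (deriv g) x := by
  by_contra hneg
  push_neg at hneg
  have hz : deriv g x = 0 :=
    (IsLocalMin.deriv_eq_zero (Filter.Eventually.of_forall hmin : IsLocalMin g x))
  have hs : Filter.Tendsto (slope (deriv g) x) (𝓝[>] x) (𝓝 (deriv (deriv g) x)) :=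
    ((hasDerivAt_iff_tendsto_slope.mp hdiff2.hasDerivAt).mono_left
      (nhdsWithin_mono x fun y hy => ne_of_gt hy))
  have hev : ∀ᶠ y in 𝓝[>] x, slope (deriv g) x y < 0 :=
    hs.eventually_lt_const hneg
  have hev2 : ∀ᶠ y in 𝓝[>] x, deriv g y < 0 := by
    filter_upwards [hev, self_mem_nhdsWithin] with y hy (hxy : x < y)
    rw [slope_def_field, hz, sub_zero] at hy
    by_contra hge
    push_neg at hge
    exact absurd hy (not_lt.mpr (div_nonneg hge (by linarith)))
  obtain ⟨b, hb, hball⟩ := (mem_nhdsGT_iff_exists_Ioo_subset).mp hev2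
  set c := (x + b) / 2 with hc
  have hxc : x < c := by simp only [hc]; linarith [hb.out]
  have hcb : c < b := by simp only [hc]; linarith [hb.out]
  have hanti : StrictAntiOn g (Icc x c) := by
    refine strictAntiOn_of_deriv_neg (convex_Icc x c)
      (fun y _ => (hdiff y).continuousAt.continuousWithinAt) ?_
    intro y hy
    rw [interior_Icc] at hy
    exact hball ⟨hy.1, lt_trans hy.2 hcb⟩
  have := hanti (left_mem_Icc.mpr hxc.le) (right_mem_Icc.mpr hxc.le) hxc
  exact absurd (hmin c) (not_le.mpr this)

lemma aux_conv_bound {Γ r : ℝ → ℝ} {M : ℝ} (hΓint : Integrable Γ)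
    (hmeas : Measurable r) (hbd : ∀ x, |r x| ≤ M) (x : ℝ) :
    |∫ y : ℝ, Γ (x - y) * r y| ≤ M * ∫ z : ℝ, |Γ z| := by
  have h1 : Integrable (fun y => Γ (x - y)) := hΓint.comp_sub_left x
  have hint : Integrable (fun y => r y * Γ (x - y)) :=
    h1.bdd_mul hmeas.aestronglyMeasurable (ae_of_all _ fun y => by simpa using hbd y)
  have hint2 : Integrable (fun y => Γ (x - y) * r y) := by
    simpa [mul_comm] using hint
  calc |∫ y : ℝ, Γ (x - y) * r y| ≤ ∫ y : ℝ, |Γ (x - y) * r y| :=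
        (norm_integral_le_integral_norm (μ := volume) (fun y => Γ (x - y) * r y))
    _ ≤ ∫ y : ℝ, |Γ (x - y)| * M := by
        refine integral_mono hint2.abs ((h1.abs).mul_const M) (fun y => ?_)
        rw [abs_mul]
        exact mul_le_mul_of_nonneg_left (hbd y) (abs_nonneg _)
    _ = (∫ y : ℝ, |Γ (x - y)|) * M := by rw [integral_mul_const]
    _ = (∫ z : ℝ, |Γ z|) * M := by
        rw [integral_sub_left_eq_self (fun z => |Γ z|) volume x]
    _ = M * ∫ z : ℝ, |Γ z| := mul_comm _ _

/-- exponential lower bound on the infimum of the area (Proposition 5.2(i)). -/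
theorem area_infimum_lower_bound
    (α β βt K Kt L μ : ℝ) (Γ : ℝ → ℝ)
    (hα : 0 < α) (hβ : 0 < β) (hβt : 0 < βt) (hK : 0 < K) (hKt : 0 < Kt) (hL : 0 < L)
    (hμ0 : 0 ≤ μ) (hμ1 : μ < 1)
    (hΓint : Integrable Γ) (hΓeven : ∀ x : ℝ, Γ (-x) = Γ x)
    (T : ℝ) (hT : 0 < T)
    (A ρ : ℝ → ℝ → ℝ)
    (hsol : IsClassicalSolution α β βt K Kt L μ Γ (Ico 0 T) A ρ)
    (hA : ∀ t ∈ Ico (0:ℝ) T, ∀ x : ℝ, 0 ≤ A t x)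
    (hρ : ∀ t ∈ Ico (0:ℝ) T, ∀ x : ℝ, 0 ≤ ρ t x)
    (MA Mρ : ℝ)
    (hAbd : ∀ t ∈ Ico (0:ℝ) T, ∀ x : ℝ, |A t x| ≤ MA)
    (hρbd : ∀ t ∈ Ico (0:ℝ) T, ∀ x : ℝ, |ρ t x| ≤ Mρ) :
    ∃ C : ℝ, 0 ≤ C ∧
      ∀ t ∈ Ico (0:ℝ) T, (⨅ x : ℝ, A 0 x) * Real.exp (-C * t) ≤ ⨅ x : ℝ, A t x := by
  have hT0 : (0:ℝ) ∈ Ico (0:ℝ) T := ⟨le_refl 0, hT⟩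
  have hMρ : 0 ≤ Mρ := (abs_nonneg _).trans (hρbd 0 hT0 0)
  have hMA : 0 ≤ MA := (abs_nonneg _).trans (hAbd 0 hT0 0)
  set G : ℝ := ∫ z : ℝ, |Γ z| with hGdef
  have hG : 0 ≤ G := integral_nonneg fun z => abs_nonneg _
  set C : ℝ := μ * α * Mρ * G + βt * Mρ * MA / Kt with hCdef
  have hC : 0 ≤ C := by
    have h1 : 0 ≤ μ * α * Mρ * G :=
      mul_nonneg (mul_nonneg (mul_nonneg hμ0 hα.le) hMρ) hG
    have h2 : 0 ≤ βt * Mρ * MA / Kt :=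
      div_nonneg (mul_nonneg (mul_nonneg hβt.le hMρ) hMA) hKt.le
    rw [hCdef]; linarith
  refine ⟨C, hC, ?_⟩
  set m₀ : ℝ := ⨅ x : ℝ, A 0 x with hm₀def
  have hbdd0 : BddBelow (Set.range (A 0)) := ⟨0, by rintro y ⟨x, rfl⟩; exact hA 0 hT0 x⟩
  have hm₀le : ∀ x : ℝ, m₀ ≤ A 0 x := fun x => ciInf_le hbdd0 x
  -- lower bound on the zeroth-order coefficient
  have hF : ∀ t ∈ Ico (0:ℝ) T, ∀ x : ℝ,
      -C ≤ (α * ρ t x - μ * α * (ρ t x - convAvg Γ ρ t x)) + βt * (1 - ρ t x * A t x / Kt) := by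
    intro t ht x
    have hconv : |convAvg Γ ρ t x| ≤ Mρ * G :=
      aux_conv_bound hΓint (hsol.measρ t ht) (fun y => hρbd t ht y) x
    have hρ0 := hρ t ht x
    have hA0 := hA t ht x
    have hρM : ρ t x ≤ Mρ := (le_abs_self _).trans (hρbd t ht x)
    have hAM : A t x ≤ MA := (le_abs_self _).trans (hAbd t ht x)
    have hconv' : -(Mρ * G) ≤ convAvg Γ ρ t x := neg_le_of_abs_le hconv
    have hprod : ρ t x * A t x ≤ Mρ * MA := mul_le_mul hρM hAM hA0 hMρ
    have hdiv : ρ t x * A t x / Kt ≤ Mρ * MA / Kt := by gcongr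
    have key3 : μ * α * (-(Mρ * G)) ≤ μ * α * convAvg Γ ρ t x :=
      mul_le_mul_of_nonneg_left hconv' (mul_nonneg hμ0 hα.le)
    have key4 : βt * (ρ t x * A t x / Kt) ≤ βt * (Mρ * MA / Kt) :=
      mul_le_mul_of_nonneg_left hdiv hβt.le
    have key5 : 0 ≤ α * ρ t x * (1 - μ) :=
      mul_nonneg (mul_nonneg hα.le hρ0) (by linarith)
    have hβt' := hβt.le
    rw [hCdef]
    set q := ρ t x * A t x / Kt with hq
    set Q := Mρ * MA / Kt with hQ
    have hqQ : βt * Mρ * MA / Kt = βt * Q := by rw [hQ]; ring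
    rw [hqQ]
    linarith [key3, key4, key5, hβt']
  -- key pointwise claim
  have key : ∀ t ∈ Ico (0:ℝ) T, ∀ x : ℝ, m₀ ≤ Real.exp (C * t) * A t x := by
    intro t₁ ht₁ x₀
    by_contra hcon
    push_neg at hcon
    set δ : ℝ := m₀ - Real.exp (C * t₁) * A t₁ x₀ with hδdef
    have hδ : 0 < δ := sub_pos.mpr hcon
    have ht₁0 : 0 ≤ t₁ := ht₁.1
    have h1t₁ : 0 < 1 + t₁ := by linarith
    set ε : ℝ := δ / (1 + t₁) with hεdef
    have hε : 0 < ε := div_pos hδ h1t₁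
    have hεδ : ε * (1 + t₁) = δ := div_mul_cancel₀ δ (ne_of_gt h1t₁)
    set u : ℝ → ℝ → ℝ := fun t x => Real.exp (C * t) * A t x - m₀ + ε * (1 + t) with hudef
    have hsub : Icc (0:ℝ) t₁ ⊆ Ico 0 T := fun s hs => ⟨hs.1, lt_of_le_of_lt hs.2 ht₁.2⟩
    -- derivative in time
    have hφ : ∀ x : ℝ, ∀ s ∈ Ico (0:ℝ) T, HasDerivAt (fun s => u s x)
        (C * Real.exp (C * s) * A s x + Real.exp (C * s) * pd_t A s x + ε) s := by
      intro x s hs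
      have h1 : HasDerivAt (fun s : ℝ => Real.exp (C * s)) (Real.exp (C * s) * (C * 1)) s :=
        ((hasDerivAt_id s).const_mul C).exp
      have h2 : HasDerivAt (fun s => A s x) (pd_t A s x) s := (hsol.diffA_t s hs x).hasDerivAt
      have h3 := h1.mul h2
      have h4 : HasDerivAt (fun s : ℝ => ε * (1 + s)) (ε * 1) s :=
        ((hasDerivAt_id s).const_add 1).const_mul ε
      have h5 := (h3.sub_const m₀).add h4
      rw [hudef]
      exact h5.congr_deriv (by ring)
    -- the compact set of bad points
    set Kc : Set (ℝ × ℝ) :=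
      (Icc 0 t₁ ×ˢ Icc 0 (2*L)) ∩ (Function.uncurry u) ⁻¹' (Iic 0) with hKcdef
    have huncurry : Function.uncurry u = fun p : ℝ × ℝ =>
        Real.exp (C * p.1) * A p.1 p.2 - m₀ + ε * (1 + p.1) := by
      funext p; rw [hudef]; rfl
    have hAcont : ContinuousOn (fun p : ℝ × ℝ => A p.1 p.2) (Icc 0 t₁ ×ˢ (univ : Set ℝ)) :=
      hsol.contA.mono (prod_mono hsub Subset.rfl)
    have hucont : ContinuousOn (Function.uncurry u) (Icc 0 t₁ ×ˢ (univ : Set ℝ)) := by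
      rw [huncurry]
      exact (((Real.continuous_exp.comp
        (continuous_const.mul continuous_fst)).continuousOn.mul hAcont).sub
        continuousOn_const).add
        (continuous_const.mul (continuous_const.add continuous_fst)).continuousOn
    have hclosed : IsClosed Kc :=
      (hucont.mono (prod_mono Subset.rfl (subset_univ _))).preimage_isClosed_of_isClosed
        (isClosed_Icc.prod isClosed_Icc) isClosed_Iic
    have hKcomp : IsCompact Kc :=
      (isCompact_Icc.prod isCompact_Icc).of_isClosed_subset hclosed inter_subset_left
    have h2L : (0:ℝ) < 2 * L := by linarith
    -- nonempty
    have hKne : Kc.Nonempty := by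
      have hper : Function.Periodic (u t₁) (2*L) := by
        intro y
        rw [hudef]
        simp only
        rw [hsol.periodicA t₁ ht₁ y]
      obtain ⟨y, hy, hxy⟩ := hper.exists_mem_Ico₀ h2L x₀
      refine ⟨(t₁, y), ⟨⟨right_mem_Icc.mpr ht₁0, Ico_subset_Icc_self hy⟩, ?_⟩⟩
      show u t₁ y ≤ 0
      rw [← hxy]
      have : u t₁ x₀ = 0 := by
        rw [hudef]
        simp only
        rw [hεδ, hδdef]
        ring
      rw [this]
    obtain ⟨p, hpK, hpmin⟩ := hKcomp.exists_isMinOn hKne continuous_fst.continuousOn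
    obtain ⟨⟨hpt, hpx⟩, hpu⟩ := hpK
    have hpu' : u p.1 p.2 ≤ 0 := hpu
    have ht'T : p.1 ∈ Ico (0:ℝ) T := hsub hpt
    -- t' > 0
    have hu0 : ∀ x, 0 < u 0 x := by
      intro x
      have hux : u 0 x = A 0 x - m₀ + ε := by
        rw [hudef]; simp
      rw [hux]
      have := hm₀le x
      linarith
    have ht'pos : 0 < p.1 := by
      rcases lt_or_eq_of_le hpt.1 with h | h
      · exact h
      · exact absurd hpu' (not_le.mpr (h ▸ hu0 p.2))
    -- before t', u positive
    have hpre : ∀ s, 0 ≤ s → s < p.1 → ∀ x, 0 < u s x := by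
      intro s hs0 hst x
      by_contra hle
      push_neg at hle
      have hsT : s ∈ Ico (0:ℝ) T := ⟨hs0, lt_of_lt_of_le hst (le_trans hpt.2 ht₁.2.le)⟩
      have hper : Function.Periodic (u s) (2*L) := by
        intro y
        rw [hudef]
        simp only
        rw [hsol.periodicA s hsT y]
      obtain ⟨y, hy, hxy⟩ := hper.exists_mem_Ico₀ h2L x
      have hmem : (s, y) ∈ Kc := by
        refine ⟨⟨⟨hs0, le_trans hst.le hpt.2⟩, Ico_subset_Icc_self hy⟩, ?_⟩
        show u s y ≤ 0
        rw [← hxy]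
        exact hle
      exact absurd (isMinOn_iff.mp hpmin (s, y) hmem) (not_le.mpr hst)
    -- u (p.1) is nonnegative everywhere
    have hunn : ∀ x, 0 ≤ u p.1 x := by
      intro x
      have hcont : ContinuousAt (fun s => u s x) p.1 := (hφ x p.1 ht'T).continuousAt
      have hev : ∀ᶠ s in 𝓝[<] p.1, 0 ≤ u s x := by
        filter_upwards [Ioo_mem_nhdsLT_of_mem ⟨ht'pos, le_refl p.1⟩] with s hs
        exact (hpre s hs.1.le hs.2 x).le
      exact ge_of_tendsto hcont.continuousWithinAt hev
    have huz : u p.1 p.2 = 0 := le_antisymm hpu' (hunn p.2)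
    have hepos : 0 < Real.exp (C * p.1) := Real.exp_pos _
    -- p.2 is a global space minimum of A (p.1)
    have hAmin : ∀ y, A p.1 p.2 ≤ A p.1 y := by
      intro y
      have h1 : u p.1 p.2 ≤ u p.1 y := huz ▸ hunn y
      rw [hudef] at h1
      simp only at h1
      have h2 : Real.exp (C * p.1) * A p.1 p.2 ≤ Real.exp (C * p.1) * A p.1 y := by linarith
      exact le_of_mul_le_mul_left h2 hepos
    have hz : deriv (A p.1) p.2 = 0 :=
      IsLocalMin.deriv_eq_zero (Filter.Eventually.of_forall hAmin)
    have hxx : 0 ≤ deriv (deriv (A p.1)) p.2 :=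
      aux_second_deriv_nonneg (fun y => hsol.diffA_x p.1 ht'T y)
        (hsol.diffA_xx p.1 ht'T p.2) hAmin
    -- spatial term is nonnegative
    have hρd := hsol.diffρ_x p.1 ht'T p.2
    have hAdd := hsol.diffA_xx p.1 ht'T p.2
    have hspat : pd_x (fun s y => ρ s y * pd_x A s y) p.1 p.2
        = deriv (fun y => ρ p.1 y) p.2 * pd_x A p.1 p.2
          + ρ p.1 p.2 * deriv (fun y => pd_x A p.1 y) p.2 :=
      deriv_mul hρd hAdd
    have hspat0 : 0 ≤ pd_x (fun s y => ρ s y * pd_x A s y) p.1 p.2 := by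
      rw [hspat]
      have h1 : pd_x A p.1 p.2 = 0 := hz
      rw [h1, mul_zero, zero_add]
      have h2 : 0 ≤ deriv (fun y => pd_x A p.1 y) p.2 := hxx
      exact mul_nonneg (hρ p.1 ht'T p.2) h2
    -- time derivative at the minimum is nonpositive
    have hD := hφ p.2 p.1 ht'T
    have hDle : C * Real.exp (C * p.1) * A p.1 p.2
        + Real.exp (C * p.1) * pd_t A p.1 p.2 + ε ≤ 0 := by
      refine aux_left_deriv_nonpos hD ?_
      filter_upwards [Ioo_mem_nhdsLT_of_mem ⟨ht'pos, le_refl p.1⟩] with s hs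
      show u p.1 p.2 ≤ u s p.2
      rw [huz]
      exact (hpre s hs.1.le hs.2 p.2).le
    -- but it is bounded below by ε > 0
    have heq := hsol.eqA p.1 ht'T p.2
    have hFbd := hF p.1 ht'T p.2
    have hA0' := hA p.1 ht'T p.2
    have hpdt : -C * A p.1 p.2 ≤ pd_t A p.1 p.2 := by
      rw [heq]
      set F₁ := α * ρ p.1 p.2 - μ * α * (ρ p.1 p.2 - convAvg Γ ρ p.1 p.2) with hF₁
      set F₂ := 1 - ρ p.1 p.2 * A p.1 p.2 / Kt with hF₂
      have hint := mul_le_mul_of_nonneg_left hFbd hA0'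
      linarith [hint, hspat0]
    have hfinal : 0 < C * Real.exp (C * p.1) * A p.1 p.2
        + Real.exp (C * p.1) * pd_t A p.1 p.2 + ε := by
      have h1 : Real.exp (C * p.1) * (-C * A p.1 p.2) ≤ Real.exp (C * p.1) * pd_t A p.1 p.2 :=
        mul_le_mul_of_nonneg_left hpdt hepos.le
      linarith [h1, hε]
    linarith
  -- conclude
  intro t ht
  refine le_ciInf fun x => ?_
  have hk := key t ht x
  have hee : Real.exp (C * t) * Real.exp (-C * t) = 1 := by
    rw [← Real.exp_add, neg_mul, add_neg_cancel, Real.exp_zero]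
  have hmul : m₀ * Real.exp (-C * t) ≤ (Real.exp (C * t) * A t x) * Real.exp (-C * t) :=
    mul_le_mul_of_nonneg_right hk (Real.exp_pos _).le
  calc m₀ * Real.exp (-C * t) ≤ (Real.exp (C * t) * A t x) * Real.exp (-C * t) := hmul
    _ = A t x * (Real.exp (C * t) * Real.exp (-C * t)) := by ring
    _ = A t x := by rw [hee, mul_one]
end

section
/- Fix parameters α, β, β̃, K, K̃, L > 0 and μ ∈ [0,1), and an even kernel Γ ∈ L¹(ℝ). Let T > 0 and let (A,ρ) be a classical solution of the cross-diffusion system on [0,T). Suppose U ⊆ ℝ is an open set, x₀ ∈ U, ρ(t,x) = 0 for all t ∈ [0,T) and all x ∈ U, and A(0,x₀) = 0. Then A(t,x₀) = 0 for all t ∈ [0,T). -/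
open MeasureTheory Set Function

/-- where the density vanishes identically, a zero of `A(0,·)` is preserved
for all time (used in the proof of Proposition 5.2(ii)). -/
theorem area_zero_preserved
    (α β βt K Kt L μ : ℝ) (Γ : ℝ → ℝ)
    (hα : 0 < α) (hβ : 0 < β) (hβt : 0 < βt) (hK : 0 < K) (hKt : 0 < Kt) (hL : 0 < L)
    (hμ0 : 0 ≤ μ) (hμ1 : μ < 1)
    (hΓint : Integrable Γ) (hΓeven : ∀ x : ℝ, Γ (-x) = Γ x)
    (T : ℝ) (hT : 0 < T)
    (A ρ : ℝ → ℝ → ℝ)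
    (hsol : IsClassicalSolution α β βt K Kt L μ Γ (Ico 0 T) A ρ)
    (U : Set ℝ) (hU : IsOpen U) (x₀ : ℝ) (hx₀ : x₀ ∈ U)
    (hρU : ∀ t ∈ Ico (0:ℝ) T, ∀ x ∈ U, ρ t x = 0)
    (hA0 : A 0 x₀ = 0) :
    ∀ t ∈ Ico (0:ℝ) T, A t x₀ = 0 := by
  intro t ht
  obtain ⟨ht0, htT⟩ := ht
  have hsub : Icc (0:ℝ) t ⊆ Ico 0 T := fun s hs => ⟨hs.1, lt_of_le_of_lt hs.2 htT⟩
  -- uniform bound on ρ on [0,t] × ℝ via periodicity and compactness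
  have hScomp : IsCompact ((Icc (0:ℝ) t) ×ˢ (Icc x₀ (x₀ + 2 * L))) :=
    isCompact_Icc.prod isCompact_Icc
  have hSsub : (Icc (0:ℝ) t) ×ˢ (Icc x₀ (x₀ + 2 * L)) ⊆ (Ico 0 T) ×ˢ (univ : Set ℝ) :=
    fun p hp => ⟨hsub hp.1, mem_univ _⟩
  obtain ⟨M, hM⟩ := hScomp.exists_bound_of_continuousOn (hsol.contρ.mono hSsub)
  have hMρ : ∀ s ∈ Icc (0:ℝ) t, ∀ x : ℝ, |ρ s x| ≤ M := by
    intro s hs x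
    have hper : Function.Periodic (ρ s) (2 * L) := fun y => hsol.periodicρ s (hsub hs) y
    obtain ⟨y, hy, hxy⟩ := hper.exists_mem_Ico (by positivity) x x₀
    have := hM (s, y) ⟨hs, Ico_subset_Icc_self hy⟩
    simpa [Function.uncurry, Real.norm_eq_abs, ← hxy] using this
  have hM0 : 0 ≤ M := le_trans (abs_nonneg _) (hMρ 0 ⟨le_refl 0, ht0⟩ x₀)
  -- bound on the nonlocal average
  set CΓ : ℝ := ∫ y : ℝ, |Γ (x₀ - y)| with hCΓ
  have hCΓ0 : 0 ≤ CΓ := integral_nonneg fun y => abs_nonneg _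
  have hΓ' : Integrable (fun y => Γ (x₀ - y)) := by
    rw [integrable_comp_sub_left Γ x₀]; exact hΓint
  have hconv : ∀ s ∈ Icc (0:ℝ) t, |convAvg Γ ρ s x₀| ≤ CΓ * M := by
    intro s hs
    have hmeas : AEStronglyMeasurable (ρ s) volume :=
      (hsol.measρ s (hsub hs)).aestronglyMeasurable
    have hint : Integrable (fun y => ρ s y * Γ (x₀ - y)) :=
      hΓ'.bdd_mul hmeas (Filter.Eventually.of_forall fun x => by simpa [Real.norm_eq_abs] using hMρ s hs x)
    have hint' : Integrable (fun y => Γ (x₀ - y) * ρ s y) := by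
      simpa [mul_comm] using hint
    have hintabs : Integrable (fun y => |Γ (x₀ - y)| * |ρ s y|) := by
      have := hint'.abs
      simpa [abs_mul] using this
    calc |convAvg Γ ρ s x₀| ≤ ∫ y : ℝ, |Γ (x₀ - y)| * |ρ s y| := by
          simpa [convAvg, Real.norm_eq_abs, abs_mul] using
            norm_integral_le_integral_norm (μ := volume) (fun y => Γ (x₀ - y) * ρ s y)
      _ ≤ ∫ y : ℝ, |Γ (x₀ - y)| * M := by
          refine integral_mono hintabs (hΓ'.abs.mul_const M) fun y => ?_
          exact mul_le_mul_of_nonneg_left (hMρ s hs y) (abs_nonneg _)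
      _ = CΓ * M := by rw [integral_mul_const]
  -- the constant for Gronwall
  set C : ℝ := μ * α * (CΓ * M) + βt with hC
  have hC0 : 0 ≤ μ * α := mul_nonneg hμ0 hα.le
  -- the key differential inequality
  have key : ∀ s ∈ Icc (0:ℝ) t, |pd_t A s x₀| ≤ C * |A s x₀| := by
    intro s hs
    have hsJ : s ∈ Ico (0:ℝ) T := hsub hs
    have hρ0 : ρ s x₀ = 0 := hρU s hsJ x₀ hx₀
    -- the flux term vanishes
    have hD : pd_x (fun s y => ρ s y * pd_x A s y) s x₀ = 0 := by
      have hev : (fun y => ρ s y * pd_x A s y) =ᶠ[nhds x₀] (fun _ => (0:ℝ)) := by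
        filter_upwards [hU.mem_nhds hx₀] with y hy
        simp [hρU s hsJ y hy]
      have hrfl : pd_x (fun s y => ρ s y * pd_x A s y) s x₀
          = deriv (fun y => ρ s y * pd_x A s y) x₀ := rfl
      rw [hrfl, Filter.EventuallyEq.deriv_eq hev]
      simp
    have heq := hsol.eqA s hsJ x₀
    rw [hρ0, hD] at heq
    have heq' : pd_t A s x₀ = A s x₀ * (μ * α * convAvg Γ ρ s x₀ + βt) := by
      rw [heq]; ring
    rw [heq', abs_mul]
    have h1 : |μ * α * convAvg Γ ρ s x₀ + βt| ≤ C := by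
      calc |μ * α * convAvg Γ ρ s x₀ + βt| ≤ |μ * α * convAvg Γ ρ s x₀| + |βt| :=
            abs_add_le _ _
        _ = μ * α * |convAvg Γ ρ s x₀| + βt := by
            rw [abs_mul, abs_of_nonneg hC0, abs_of_pos hβt]
        _ ≤ μ * α * (CΓ * M) + βt := by
            have := mul_le_mul_of_nonneg_left (hconv s hs) hC0
            linarith
    calc |A s x₀| * |μ * α * convAvg Γ ρ s x₀ + βt| ≤ |A s x₀| * C :=
          mul_le_mul_of_nonneg_left h1 (abs_nonneg _)
      _ = C * |A s x₀| := mul_comm _ _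
  -- Gronwall
  have hcont : ContinuousOn (fun s => A s x₀) (Icc 0 t) := by
    have : ContinuousOn (Function.uncurry A ∘ fun s => (s, x₀)) (Icc 0 t) := by
      refine hsol.contA.comp ((continuous_id.prodMk continuous_const).continuousOn) ?_
      exact fun s hs => ⟨hsub hs, mem_univ _⟩
    exact this
  have hderiv : ∀ s ∈ Ico (0:ℝ) t, HasDerivWithinAt (fun s => A s x₀)
      (pd_t A s x₀) (Ici s) s := by
    intro s hs
    exact ((hsol.diffA_t s (hsub (Ico_subset_Icc_self hs)) x₀).hasDerivAt).hasDerivWithinAt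
  have hgron := norm_le_gronwallBound_of_norm_deriv_right_le (δ := 0) (K := C) (ε := 0)
    hcont hderiv (by simp [hA0, Real.norm_eq_abs])
    (fun s hs => by
      simpa [Real.norm_eq_abs] using key s (Ico_subset_Icc_self hs))
  have := hgron t ⟨ht0, le_refl t⟩
  rw [gronwallBound_ε0_δ0] at this
  simpa [Real.norm_eq_abs, abs_nonpos_iff] using this
end

section
/- Fix parameters α, β, β̃, K, K̃, L > 0 and μ ∈ [0,1), and an even kernel Γ ∈ L¹(ℝ). Let T > 0 and let (A,ρ) be a classical solution of the cross-diffusion system on [0,T) with A ≥ 0 and ρ ≥ 0 on [0,T)×ℝ, and suppose A and ρ are bounded on [0,T)×ℝ. Then there exists a constant C ≥ 0, depending only on α, β, μ, K, ‖Γ‖_{L¹}, ‖A‖_{L∞([0,T)×ℝ)} and ‖ρ‖_{L∞([0,T)×ℝ)}, such that inf_{x∈ℝ} ρ(t,x) ≥ (inf_{x∈ℝ} ρ(0,x)) · e^{−Ct} for all t ∈ [0,T). In particular, if ρ(0,x) ≥ δ for some δ > 0 and all x, then ρ(t,x) > 0 for all (t,x) ∈ [0,T)×ℝ. -/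
open MeasureTheory Set Function

lemma conv_abs_bound (Γ : ℝ → ℝ) (hΓ : Integrable Γ) (f : ℝ → ℝ) (hf : Measurable f)
    (M : ℝ) (hM : ∀ y, |f y| ≤ M) (x : ℝ) :
    |∫ y : ℝ, Γ (x - y) * f y| ≤ (∫ y : ℝ, |Γ y|) * M := by
  have hΓx : Integrable (fun y : ℝ => Γ (x - y)) := hΓ.comp_sub_left x
  calc |∫ y : ℝ, Γ (x - y) * f y| ≤ ∫ y : ℝ, |Γ (x - y)| * |f y| := by
        have := norm_integral_le_integral_norm (μ := volume) (fun y : ℝ => Γ (x - y) * f y)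
        simpa [Real.norm_eq_abs, abs_mul] using this
    _ ≤ ∫ y : ℝ, |Γ (x - y)| * M := by
        refine integral_mono_of_nonneg (Filter.Eventually.of_forall fun y => mul_nonneg (abs_nonneg _) (abs_nonneg _))
          (hΓx.abs.mul_const M) (Filter.Eventually.of_forall fun y => ?_)
        exact mul_le_mul_of_nonneg_left (hM y) (abs_nonneg _)
    _ = (∫ y : ℝ, |Γ (x - y)|) * M := integral_mul_const _ _
    _ = (∫ y : ℝ, |Γ y|) * M := by
        rw [integral_sub_left_eq_self (fun y => |Γ y|) volume x]

lemma deriv_nonpos_of_right_min {f : ℝ → ℝ} {a b : ℝ} (hab : a < b)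
    (hd : DifferentiableAt ℝ f b) (hmin : ∀ t ∈ Icc a b, f b ≤ f t) : deriv f b ≤ 0 := by
  have h := hd.hasDerivAt
  rw [hasDerivAt_iff_tendsto_slope] at h
  have h' : Filter.Tendsto (slope f b) (nhdsWithin b (Iio b)) (nhds (deriv f b)) :=
    h.mono_left (nhdsWithin_mono b fun y hy => ne_of_lt hy)
  refine le_of_tendsto h' ?_
  filter_upwards [Ioo_mem_nhdsLT_of_mem (⟨hab, le_refl b⟩ : b ∈ Ioc a b)] with t ht
  rw [slope_def_field]
  have h1 : 0 ≤ f t - f b := sub_nonneg.2 (hmin t ⟨ht.1.le, ht.2.le⟩)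
  have h2 : t - b < 0 := sub_neg.2 ht.2
  exact div_nonpos_of_nonneg_of_nonpos h1 h2.le

lemma deriv2_nonneg_of_min {f : ℝ → ℝ} {x : ℝ} (hf : ∀ y, DifferentiableAt ℝ f y)
    (hd : DifferentiableAt ℝ (deriv f) x) (hmin : ∀ y, f x ≤ f y) :
    0 ≤ deriv (deriv f) x := by
  by_contra hcon
  push_neg at hcon
  have h0 : deriv f x = 0 :=
    IsLocalMin.deriv_eq_zero (Filter.Eventually.of_forall fun y => hmin y)
  have hs := hd.hasDerivAt
  rw [hasDerivAt_iff_tendsto_slope] at hs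
  have hs' : Filter.Tendsto (slope (deriv f) x) (nhdsWithin x (Ioi x))
      (nhds (deriv (deriv f) x)) :=
    hs.mono_left (nhdsWithin_mono x fun y hy => ne_of_gt hy)
  have hev : ∀ᶠ y in nhdsWithin x (Ioi x), slope (deriv f) x y < 0 :=
    hs'.eventually (eventually_lt_nhds hcon)
  obtain ⟨u, hu, hsub⟩ := mem_nhdsGT_iff_exists_Ioo_subset.1 hev
  have hxu : x < u := hu
  have hneg : ∀ y ∈ Ioo x u, deriv f y < 0 := by
    intro y hy
    have := hsub hy
    simp only [mem_setOf_eq] at this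
    rw [slope_def_field, h0, sub_zero] at this
    have hyx : 0 < y - x := sub_pos.2 hy.1
    nlinarith [(div_lt_iff₀ hyx).1 this]
  have hanti : StrictAntiOn f (Icc x u) := by
    apply strictAntiOn_of_deriv_neg (convex_Icc x u)
      (fun y _ => (hf y).continuousAt.continuousWithinAt)
    intro y hy
    rw [interior_Icc] at hy
    exact hneg y hy
  have hmem : (x + u) / 2 ∈ Icc x u := ⟨by linarith, by linarith⟩
  have := hanti (left_mem_Icc.2 hxu.le) hmem (by linarith)
  exact absurd (hmin ((x + u) / 2)) (not_le.2 this)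

set_option maxHeartbeats 2000000 in
/-- exponential lower bound on the infimum of the density (strict-positivity
preservation used in the local existence proof, Theorem 1.1). -/
theorem density_infimum_lower_bound
    (α β βt K Kt L μ : ℝ) (Γ : ℝ → ℝ)
    (hα : 0 < α) (hβ : 0 < β) (hβt : 0 < βt) (hK : 0 < K) (hKt : 0 < Kt) (hL : 0 < L)
    (hμ0 : 0 ≤ μ) (hμ1 : μ < 1)
    (hΓint : Integrable Γ) (hΓeven : ∀ x : ℝ, Γ (-x) = Γ x)
    (T : ℝ) (hT : 0 < T)
    (A ρ : ℝ → ℝ → ℝ)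
    (hsol : IsClassicalSolution α β βt K Kt L μ Γ (Ico 0 T) A ρ)
    (hA : ∀ t ∈ Ico (0:ℝ) T, ∀ x : ℝ, 0 ≤ A t x)
    (hρ : ∀ t ∈ Ico (0:ℝ) T, ∀ x : ℝ, 0 ≤ ρ t x)
    (MA Mρ : ℝ)
    (hAbd : ∀ t ∈ Ico (0:ℝ) T, ∀ x : ℝ, |A t x| ≤ MA)
    (hρbd : ∀ t ∈ Ico (0:ℝ) T, ∀ x : ℝ, |ρ t x| ≤ Mρ) :
    (∃ C : ℝ, 0 ≤ C ∧
      ∀ t ∈ Ico (0:ℝ) T, (⨅ x : ℝ, ρ 0 x) * Real.exp (-C * t) ≤ ⨅ x : ℝ, ρ t x) ∧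
    (∀ δ : ℝ, 0 < δ → (∀ x : ℝ, δ ≤ ρ 0 x) →
      ∀ t ∈ Ico (0:ℝ) T, ∀ x : ℝ, 0 < ρ t x) := by
  -- basic constants
  set IΓ : ℝ := ∫ y : ℝ, |Γ y| with hIΓdef
  have hIΓ0 : 0 ≤ IΓ := integral_nonneg fun y => abs_nonneg _
  have h0T : (0:ℝ) ∈ Ico (0:ℝ) T := ⟨le_refl 0, hT⟩
  have hMA0 : 0 ≤ MA := le_trans (abs_nonneg _) (hAbd 0 h0T 0)
  have hMρ0 : 0 ≤ Mρ := le_trans (abs_nonneg _) (hρbd 0 h0T 0)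
  set C : ℝ := β * MA * Mρ / K + α * Mρ + α * IΓ * Mρ with hCdef
  have hC0 : 0 ≤ C := by
    have h1 : 0 ≤ β * MA * Mρ / K :=
      div_nonneg (mul_nonneg (mul_nonneg hβ.le hMA0) hMρ0) hK.le
    have h2 : 0 ≤ α * Mρ := mul_nonneg hα.le hMρ0
    have h3 : 0 ≤ α * IΓ * Mρ := mul_nonneg (mul_nonneg hα.le hIΓ0) hMρ0
    rw [hCdef]
    linarith
  have hbdd : BddBelow (Set.range (ρ 0)) := by
    refine ⟨0, fun v hv => ?_⟩
    obtain ⟨x, rfl⟩ := hv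
    exact hρ 0 h0T x
  have hL2 : (0:ℝ) < 2 * L := by linarith
  -- the key pointwise bound
  have key : ∀ t₀ ∈ Ico (0:ℝ) T, ∀ x₀ : ℝ,
      (⨅ x : ℝ, ρ 0 x) * Real.exp (-C * t₀) ≤ ρ t₀ x₀ := by
    rintro t₀ ⟨ht₀0, ht₀T⟩ x₀
    -- ε-perturbed estimate
    have hε : ∀ ε : ℝ, 0 < ε →
        ((⨅ x : ℝ, ρ 0 x) - ε * t₀) * Real.exp (-((C + ε) * t₀)) ≤ ρ t₀ x₀ := by
      intro ε hεpos
      set c : ℝ := C + ε with hcdef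
      set K' : Set (ℝ × ℝ) := Icc 0 t₀ ×ˢ Icc 0 (2 * L) with hK'def
      have hKc : IsCompact K' := isCompact_Icc.prod isCompact_Icc
      have hKne : K'.Nonempty := ⟨(0, 0), ⟨⟨le_refl 0, ht₀0⟩, ⟨le_refl 0, hL2.le⟩⟩⟩
      have hKsub : K' ⊆ Ico (0:ℝ) T ×ˢ (univ : Set ℝ) := by
        rintro ⟨t, x⟩ ⟨⟨h1, h2⟩, -⟩
        exact ⟨⟨h1, lt_of_le_of_lt h2 ht₀T⟩, trivial⟩
      have hcont : ContinuousOn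
          (fun p : ℝ × ℝ => Real.exp (c * p.1) * ρ p.1 p.2 + ε * p.1) K' := by
        have h1 : ContinuousOn (fun p : ℝ × ℝ => Real.exp (c * p.1)) K' :=
          (Real.continuous_exp.comp (continuous_const.mul continuous_fst)).continuousOn
        have h2 : ContinuousOn (fun p : ℝ × ℝ => ρ p.1 p.2) K' := hsol.contρ.mono hKsub
        exact (h1.mul h2).add (continuous_const.mul continuous_fst).continuousOn
      obtain ⟨p, hpK, hpmin⟩ := hKc.exists_isMinOn hKne hcont
      have hmin' : ∀ q ∈ K', Real.exp (c * p.1) * ρ p.1 p.2 + ε * p.1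
          ≤ Real.exp (c * q.1) * ρ q.1 q.2 + ε * q.1 := fun q hq => isMinOn_iff.1 hpmin q hq
      obtain ⟨ts, xs⟩ := p
      have htsmem : ts ∈ Icc 0 t₀ := hpK.1
      have hxsmem : xs ∈ Icc 0 (2 * L) := hpK.2
      have htsJ : ts ∈ Ico (0:ℝ) T := ⟨htsmem.1, lt_of_le_of_lt htsmem.2 ht₀T⟩
      have hE : (0:ℝ) < Real.exp (c * ts) := Real.exp_pos _
      -- the minimum of u on K' is at least m0
      have hm0le : (⨅ x : ℝ, ρ 0 x) ≤ Real.exp (c * ts) * ρ ts xs + ε * ts := by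
        by_contra hlt
        push_neg at hlt
        -- ts > 0
        have hts0 : 0 < ts := by
          rcases lt_or_eq_of_le htsmem.1 with h | h
          · exact h
          · exfalso
            have hge : (⨅ x : ℝ, ρ 0 x) ≤ ρ 0 xs := ciInf_le hbdd xs
            rw [← h] at hlt
            simp only [mul_zero, Real.exp_zero, one_mul] at hlt
            linarith
        -- spatial global minimality of ρ ts at xs
        have hperρ : Function.Periodic (ρ ts) (2 * L) := fun z => hsol.periodicρ ts htsJ z
        have hxmin : ∀ y : ℝ, ρ ts xs ≤ ρ ts y := by
          intro y
          obtain ⟨y', hy', hyy⟩ := hperρ.exists_mem_Ico₀ hL2 y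
          have hmem : ((ts, y') : ℝ × ℝ) ∈ K' := ⟨htsmem, ⟨hy'.1, hy'.2.le⟩⟩
          have h := hmin' (ts, y') hmem
          simp only at h
          rw [hyy]
          have : Real.exp (c * ts) * ρ ts xs ≤ Real.exp (c * ts) * ρ ts y' := by linarith
          exact le_of_mul_le_mul_left this hE
        -- PDE quantities at (ts, xs)
        have hr0 : 0 ≤ ρ ts xs := hρ ts htsJ xs
        have hrM : ρ ts xs ≤ Mρ := le_of_abs_le (hρbd ts htsJ xs)
        have ha0 : 0 ≤ A ts xs := hA ts htsJ xs
        have haM : A ts xs ≤ MA := le_of_abs_le (hAbd ts htsJ xs)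
        have hconv : |convAvg Γ ρ ts xs| ≤ IΓ * Mρ :=
          conv_abs_bound Γ hΓint (ρ ts) (hsol.measρ ts htsJ) Mρ (hρbd ts htsJ) xs
        -- first spatial derivative vanishes
        have hdx : deriv (fun y => ρ ts y) xs = 0 :=
          IsLocalMin.deriv_eq_zero (Filter.Eventually.of_forall fun y => hxmin y)
        -- second spatial derivative is nonnegative
        have hdxx : 0 ≤ deriv (deriv (fun y => ρ ts y)) xs := by
          refine deriv2_nonneg_of_min (fun y => hsol.diffρ_x ts htsJ y) ?_ hxmin
          exact hsol.diffρ_xx ts htsJ xs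
        -- diffusion term at the minimum
        have hdiff : pd_x (fun s y => ρ s y * pd_x ρ s y) ts xs
            = ρ ts xs * deriv (deriv (fun y => ρ ts y)) xs := by
          have h1 : DifferentiableAt ℝ (fun y => ρ ts y) xs := hsol.diffρ_x ts htsJ xs
          have h2 : DifferentiableAt ℝ (fun y => pd_x ρ ts y) xs := hsol.diffρ_xx ts htsJ xs
          have h3 := deriv_fun_mul h1 h2
          simp only [pd_x] at h3 ⊢
          rw [h3, hdx]
          ring
        -- lower bound for the time derivative of ρ
        have hpde : -C * ρ ts xs ≤ pd_t ρ ts xs := by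
          have heq := hsol.eqρ ts htsJ xs
          rw [hdiff] at heq
          have hμle : μ * α * ρ ts xs * convAvg Γ ρ ts xs ≤ α * IΓ * Mρ * ρ ts xs := by
            have hh1 : μ * α * ρ ts xs * convAvg Γ ρ ts xs
                ≤ μ * α * ρ ts xs * (IΓ * Mρ) := by
              have := mul_le_mul_of_nonneg_left
                (le_trans (le_abs_self (convAvg Γ ρ ts xs)) hconv)
                (mul_nonneg (mul_nonneg hμ0 hα.le) hr0)
              linarith
            have hnn : 0 ≤ α * ρ ts xs * (IΓ * Mρ) :=
              mul_nonneg (mul_nonneg hα.le hr0) (mul_nonneg hIΓ0 hMρ0)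
            nlinarith [mul_nonneg (sub_nonneg.2 hμ1.le) hnn]
          have har2 : β * (A ts xs * ρ ts xs * ρ ts xs) / K ≤ β * MA * Mρ / K * ρ ts xs := by
            have hh1 : A ts xs * ρ ts xs * ρ ts xs ≤ MA * Mρ * ρ ts xs :=
              mul_le_mul_of_nonneg_right (mul_le_mul haM hrM hr0 hMA0) hr0
            have hh2 : β * (A ts xs * ρ ts xs * ρ ts xs) ≤ β * MA * Mρ * ρ ts xs := by
              have := mul_le_mul_of_nonneg_left hh1 hβ.le
              linarith [this]
            have hh3 := div_le_div_of_nonneg_right hh2 hK.le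
            rw [div_mul_eq_mul_div]
            exact hh3
          have har3 : α * ρ ts xs * ρ ts xs ≤ α * Mρ * ρ ts xs := by
            nlinarith [mul_nonneg (mul_nonneg hα.le hr0) (sub_nonneg.2 hrM)]
          have hdnn : 0 ≤ ρ ts xs * deriv (deriv (fun y => ρ ts y)) xs :=
            mul_nonneg hr0 hdxx
          have hμr2 : 0 ≤ μ * α * ρ ts xs * ρ ts xs := by positivity
          have hβr : 0 ≤ β * ρ ts xs := mul_nonneg hβ.le hr0
          rw [heq, hCdef]
          have hexp : β * ρ ts xs * (1 - A ts xs * ρ ts xs / K) - α * (ρ ts xs) ^ 2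
              + μ * α * ρ ts xs * (ρ ts xs - convAvg Γ ρ ts xs)
              = β * ρ ts xs - β * (A ts xs * ρ ts xs * ρ ts xs) / K
                - α * ρ ts xs * ρ ts xs + μ * α * ρ ts xs * ρ ts xs
                - μ * α * ρ ts xs * convAvg Γ ρ ts xs := by ring
          rw [hexp]
          linarith
        -- time derivative of u at (ts, xs) is nonpositive
        have h1 : HasDerivAt (fun s => Real.exp (c * s)) (Real.exp (c * ts) * c) ts := by
          simpa [Function.comp_def] using (Real.hasDerivAt_exp (c * ts)).comp ts ((hasDerivAt_id ts).const_mul c)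
        have h2 : HasDerivAt (fun s => ρ s xs) (pd_t ρ ts xs) ts :=
          (hsol.diffρ_t ts htsJ xs).hasDerivAt
        have h3 : HasDerivAt (fun s => Real.exp (c * s) * ρ s xs + ε * s)
            (Real.exp (c * ts) * c * ρ ts xs + Real.exp (c * ts) * pd_t ρ ts xs + ε * 1) ts :=
          (h1.mul h2).add ((hasDerivAt_id ts).const_mul ε)
        have hfmin : ∀ s ∈ Icc (0:ℝ) ts,
            (fun s => Real.exp (c * s) * ρ s xs + ε * s) ts
            ≤ (fun s => Real.exp (c * s) * ρ s xs + ε * s) s := by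
          intro s hs
          have hmem : ((s, xs) : ℝ × ℝ) ∈ K' := ⟨⟨hs.1, le_trans hs.2 htsmem.2⟩, hxsmem⟩
          exact hmin' (s, xs) hmem
        have hle0 : deriv (fun s => Real.exp (c * s) * ρ s xs + ε * s) ts ≤ 0 :=
          deriv_nonpos_of_right_min hts0 h3.differentiableAt hfmin
        rw [h3.deriv] at hle0
        -- but the PDE forces it positive: contradiction
        have hEineq : Real.exp (c * ts) * (-C * ρ ts xs) ≤ Real.exp (c * ts) * pd_t ρ ts xs :=
          mul_le_mul_of_nonneg_left hpde hE.le
        have hcCr : Real.exp (c * ts) * c * ρ ts xs = Real.exp (c * ts) * (C * ρ ts xs) +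
            Real.exp (c * ts) * (ε * ρ ts xs) := by rw [hcdef]; ring
        have hεr : 0 ≤ Real.exp (c * ts) * (ε * ρ ts xs) :=
          mul_nonneg hE.le (mul_nonneg hεpos.le hr0)
        have hEC : Real.exp (c * ts) * (-C * ρ ts xs)
            = -(Real.exp (c * ts) * (C * ρ ts xs)) := by ring
        linarith [hEC ▸ hEineq]
      -- conclude the ε-estimate via periodicity at time t₀
      have hperρ₀ : Function.Periodic (ρ t₀) (2 * L) :=
        fun z => hsol.periodicρ t₀ ⟨ht₀0, ht₀T⟩ z
      obtain ⟨x', hx', hxx⟩ := hperρ₀.exists_mem_Ico₀ hL2 x₀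
      have hmem : ((t₀, x') : ℝ × ℝ) ∈ K' := ⟨⟨ht₀0, le_refl t₀⟩, ⟨hx'.1, hx'.2.le⟩⟩
      have hchain : (⨅ x : ℝ, ρ 0 x) ≤ Real.exp (c * t₀) * ρ t₀ x' + ε * t₀ :=
        le_trans hm0le (hmin' (t₀, x') hmem)
      rw [hxx]
      have hEt : (0:ℝ) < Real.exp (c * t₀) := Real.exp_pos _
      rw [Real.exp_neg, ← div_eq_mul_inv, div_le_iff₀ hEt]
      nlinarith
    -- let ε → 0⁺
    have htend : Filter.Tendsto
        (fun ε : ℝ => ((⨅ x : ℝ, ρ 0 x) - ε * t₀) * Real.exp (-((C + ε) * t₀)))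
        (nhdsWithin 0 (Ioi 0)) (nhds ((⨅ x : ℝ, ρ 0 x) * Real.exp (-C * t₀))) := by
      have hcont : Continuous
          (fun ε : ℝ => ((⨅ x : ℝ, ρ 0 x) - ε * t₀) * Real.exp (-((C + ε) * t₀))) :=
        (continuous_const.sub (continuous_id.mul continuous_const)).mul
          (Real.continuous_exp.comp ((continuous_const.add continuous_id).mul
            continuous_const).neg)
      have h := (hcont.tendsto 0).mono_left (nhdsWithin_le_nhds (s := Ioi (0:ℝ)))
      simpa [neg_mul] using h
    refine le_of_tendsto htend ?_
    filter_upwards [self_mem_nhdsWithin] with ε hεm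
    exact hε ε hεm
  constructor
  · refine ⟨C, hC0, fun t ht => ?_⟩
    exact le_ciInf fun x => key t ht x
  · intro δ hδ hδρ t ht x
    have hδm0 : δ ≤ ⨅ x : ℝ, ρ 0 x := le_ciInf fun x => hδρ x
    have h1 : 0 < δ * Real.exp (-C * t) := mul_pos hδ (Real.exp_pos _)
    have h2 : δ * Real.exp (-C * t) ≤ (⨅ x : ℝ, ρ 0 x) * Real.exp (-C * t) :=
      mul_le_mul_of_nonneg_right hδm0 (Real.exp_pos _).le
    exact lt_of_lt_of_le h1 (le_trans h2 (key t ht x))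
end

section
/- Let L > 0 and let P : ℝ → ℝ be five times continuously differentiable and 2L-periodic. Then ∫_{−L}^{L} P'''(x) · ((P·P')''''(x)) dx = 8·∫_{−L}^{L} P''(x)·(P'''(x))² dx − ∫_{−L}^{L} P(x)·(P''''(x))² dx, where (P·P')'''' denotes the fourth derivative of the function x ↦ P(x)·P'(x). -/
open intervalIntegral

/-- integration-by-parts identity for `2L`-periodic `C⁵` functions:
`∫ P''' (P·P')'''' = 8 ∫ P'' (P''')² − ∫ P (P'''')²` over one period `[−L, L]`. -/
theorem periodic_integration_by_parts_identity (L : ℝ) (hL : 0 < L)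
    (P : ℝ → ℝ) (hP : ContDiff ℝ 5 P)
    (hper : ∀ x : ℝ, P (x + 2 * L) = P x) :
    ∫ x in (-L)..L, iteratedDeriv 3 P x * iteratedDeriv 4 (fun y => P y * deriv P y) x =
      8 * (∫ x in (-L)..L, iteratedDeriv 2 P x * (iteratedDeriv 3 P x) ^ 2)
        - ∫ x in (-L)..L, P x * (iteratedDeriv 4 P x) ^ 2 := by
  set P1 := iteratedDeriv 1 P with hP1def
  set P2 := iteratedDeriv 2 P with hP2def
  set P3 := iteratedDeriv 3 P with hP3def
  set P4 := iteratedDeriv 4 P with hP4def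
  set P5 := iteratedDeriv 5 P with hP5def
  -- differentiability and continuity of iterated derivatives
  have hdiff : ∀ k : ℕ, k < 5 → Differentiable ℝ (iteratedDeriv k P) := by
    intro k hk
    exact hP.differentiable_iteratedDeriv k (by exact_mod_cast hk)
  have hcont : ∀ k : ℕ, k ≤ 5 → Continuous (iteratedDeriv k P) := by
    intro k hk
    exact hP.continuous_iteratedDeriv k (by exact_mod_cast hk)
  have hD : ∀ (k : ℕ), k < 5 → ∀ x, HasDerivAt (iteratedDeriv k P) (iteratedDeriv (k+1) P x) x := by
    intro k hk x
    rw [iteratedDeriv_succ]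
    exact (hdiff k hk x).hasDerivAt
  have hD0 : ∀ x, HasDerivAt P (P1 x) x := by
    intro x
    have h := hD 0 (by norm_num) x
    rw [iteratedDeriv_zero] at h
    exact h
  have hD1 : ∀ x, HasDerivAt P1 (P2 x) x := fun x => hD 1 (by norm_num) x
  have hD2 : ∀ x, HasDerivAt P2 (P3 x) x := fun x => hD 2 (by norm_num) x
  have hD3 : ∀ x, HasDerivAt P3 (P4 x) x := fun x => hD 3 (by norm_num) x
  have hD4 : ∀ x, HasDerivAt P4 (P5 x) x := fun x => hD 4 (by norm_num) x
  have hderivP : deriv P = P1 := by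
    funext x; exact (hD0 x).deriv
  -- compute iteratedDeriv 4 (P * P')
  have hQ : ∀ x, iteratedDeriv 4 (fun y => P y * deriv P y) x
      = 10 * P2 x * P3 x + 5 * P1 x * P4 x + P x * P5 x := by
    have e1 : deriv (fun y => P y * deriv P y) = fun x => P1 x * P1 x + P x * P2 x := by
      funext x
      have h : HasDerivAt (fun y => P y * P1 y) (P1 x * P1 x + P x * P2 x) x :=
        (hD0 x).mul (hD1 x)
      have h2 : (fun y => P y * deriv P y) = fun y => P y * P1 y := by
        funext y; rw [hderivP]
      rw [h2]
      exact h.deriv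
    have e2 : deriv (fun x => P1 x * P1 x + P x * P2 x)
        = fun x => 3 * P1 x * P2 x + P x * P3 x := by
      funext x
      have : HasDerivAt (fun x => P1 x * P1 x + P x * P2 x)
          (P2 x * P1 x + P1 x * P2 x + (P1 x * P2 x + P x * P3 x)) x :=
        ((hD1 x).mul (hD1 x)).add ((hD0 x).mul (hD2 x))
      have := this.deriv
      rw [this]; ring
    have e3 : deriv (fun x => 3 * P1 x * P2 x + P x * P3 x)
        = fun x => 3 * P2 x ^ 2 + 4 * P1 x * P3 x + P x * P4 x := by
      funext x
      have : HasDerivAt (fun x => 3 * P1 x * P2 x + P x * P3 x)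
          ((3 * P2 x) * P2 x + (3 * P1 x) * P3 x + (P1 x * P3 x + P x * P4 x)) x := by
        exact ((((hD1 x).const_mul 3).mul (hD2 x))).add ((hD0 x).mul (hD3 x))
      have := this.deriv
      rw [this]; ring
    have e4 : deriv (fun x => 3 * P2 x ^ 2 + 4 * P1 x * P3 x + P x * P4 x)
        = fun x => 10 * P2 x * P3 x + 5 * P1 x * P4 x + P x * P5 x := by
      funext x
      have : HasDerivAt (fun x => 3 * P2 x ^ 2 + 4 * P1 x * P3 x + P x * P4 x)
          (3 * (2 * P2 x ^ 1 * P3 x) + ((4 * P2 x) * P3 x + (4 * P1 x) * P4 x)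
            + (P1 x * P4 x + P x * P5 x)) x := by
        exact ((((hD2 x).pow 2).const_mul 3).add (((hD1 x).const_mul 4).mul (hD3 x))).add
          ((hD0 x).mul (hD4 x))
      have := this.deriv
      rw [this]; ring
    intro x
    have : iteratedDeriv 4 (fun y => P y * deriv P y)
        = fun x => 10 * P2 x * P3 x + 5 * P1 x * P4 x + P x * P5 x := by
      rw [show iteratedDeriv 4 (fun y => P y * deriv P y)
          = iteratedDeriv (0 + 1 + 1 + 1 + 1) (fun y => P y * deriv P y) from rfl]
      rw [iteratedDeriv_succ, iteratedDeriv_succ, iteratedDeriv_succ, iteratedDeriv_succ,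
        iteratedDeriv_zero, e1, e2, e3, e4]
    rw [this]
  -- the antiderivative F
  set F : ℝ → ℝ := fun x => P x * P3 x * P4 x + 2 * P1 x * P3 x ^ 2 with hFdef
  set F' : ℝ → ℝ := fun x => P1 x * P3 x * P4 x + P x * P4 x ^ 2 + P x * P3 x * P5 x
      + 2 * P2 x * P3 x ^ 2 + 4 * P1 x * P3 x * P4 x with hF'def
  have hF : ∀ x, HasDerivAt F (F' x) x := by
    intro x
    have h : HasDerivAt F
        ((P1 x * P3 x + P x * P4 x) * P4 x + P x * P3 x * P5 x
          + ((2 * P2 x) * P3 x ^ 2 + (2 * P1 x) * (2 * P3 x ^ 1 * P4 x))) x := by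
      exact (((hD0 x).mul (hD3 x)).mul (hD4 x)).add
        (((hD1 x).const_mul 2).mul ((hD3 x).pow 2))
    convert h using 1
    simp [hF'def]; ring
  -- periodicity of everything
  have hperiter : ∀ k : ℕ, ∀ x, iteratedDeriv k P (x + 2 * L) = iteratedDeriv k P x := by
    intro k
    induction k with
    | zero => simpa using hper
    | succ n ih =>
      intro x
      rw [iteratedDeriv_succ]
      have : iteratedDeriv n P = fun y => iteratedDeriv n P (y + 2 * L) := by
        funext y; rw [ih]
      calc deriv (iteratedDeriv n P) (x + 2 * L)
          = deriv (fun y => iteratedDeriv n P (y + 2 * L)) x := by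
            rw [deriv_comp_add_const]
        _ = deriv (iteratedDeriv n P) x := by rw [← this]
  have hFper : F (-L + 2 * L) = F (-L) := by
    simp only [hFdef, hP1def, hP3def, hP4def]
    rw [hper, hperiter 1, hperiter 3, hperiter 4]
  -- ∫ F' = 0
  have hcont0 : Continuous P := hP.continuous
  have hc1 : Continuous P1 := hcont 1 (by norm_num)
  have hc2 : Continuous P2 := hcont 2 (by norm_num)
  have hc3 : Continuous P3 := hcont 3 (by norm_num)
  have hc4 : Continuous P4 := hcont 4 (by norm_num)
  have hc5 : Continuous P5 := hcont 5 (by norm_num)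
  have hcF' : Continuous F' := by
    simp only [hF'def]
    fun_prop
  have hintF' : ∫ x in (-L)..L, F' x = 0 := by
    rw [integral_eq_sub_of_hasDerivAt (fun x _ => hF x) (hcF'.intervalIntegrable _ _)]
    have hFL : F L = F (-L) := by
      have h := hFper
      rwa [show -L + 2 * L = L by ring] at h
    rw [hFL, sub_self]
  -- integrand identity
  have key : ∀ x, P3 x * iteratedDeriv 4 (fun y => P y * deriv P y) x
      = 8 * (P2 x * P3 x ^ 2) - P x * P4 x ^ 2 + F' x := by
    intro x
    rw [hQ x]
    simp only [hF'def]
    ring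
  rw [intervalIntegral.integral_congr (g := fun x => 8 * (P2 x * P3 x ^ 2) - P x * P4 x ^ 2 + F' x)
    (fun x _ => key x)]
  have i1 : IntervalIntegrable (fun x => P2 x * P3 x ^ 2) MeasureTheory.volume (-L) L :=
    (by fun_prop : Continuous fun x => P2 x * P3 x ^ 2).intervalIntegrable _ _
  have i2 : IntervalIntegrable (fun x => P x * P4 x ^ 2) MeasureTheory.volume (-L) L :=
    (by fun_prop : Continuous fun x => P x * P4 x ^ 2).intervalIntegrable _ _
  have i3 : IntervalIntegrable F' MeasureTheory.volume (-L) L := hcF'.intervalIntegrable _ _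
  rw [integral_add (((i1.const_mul 8).sub i2)) i3, integral_sub (i1.const_mul 8) i2,
    integral_const_mul, hintF']
  ring
end
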